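/- arXiv:1111.2440 — 10 statements merged into one kernel-verified Lean document; each statement's English description precedes it below -/
import Mathlib

section
/- Let F and G be Bessel mappings for H with respect to (Ω, μ) and suppose that F is norm bounded by some L > 0 or G is norm bounded by some L > 0. Let m : Ω → ℂ be measurable, essentially bounded, and vanishing at infinity in the sense that for every ε > 0 there exists a measurable K ⊆ Ω with μ(K) < ∞ such that |m(ω)| ≤ ε for μ-almost every ω ∈ Ω \ K. If M : H → H is a bounded operator satisfying ⟨M f, g⟩ = ∫_Ω m(ω)⟨f, F(ω)⟩⟨G(ω), g⟩ dμ(ω) for all f, g ∈ H, then M is a compact operator. -/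
/-!
`M` is approximated in operator norm by finite-rank operators; compact operators form a closed
set. Say `‖F‖ ≤ L`. For every orthonormal family `(vᵢ)` Bessel's inequality gives
`∑ᵢ ∫_K |⟪F, vᵢ⟫|² ≤ L² μ(K)`, so the form `f ↦ ∫_K |⟪F, f⟫|²` is at most `ε² ‖f‖²` on the
orthogonal complement of some finite-dimensional subspace `U`. Splitting the integral for
`⟪g, M f⟫` over `K`, where this form is small, and its complement, where `|m| ≤ ε`, and applying
Cauchy–Schwarz together with the Bessel bounds shows `‖M - M P_U‖ = O(ε)`. When `G` is bounded,
the same argument applies to `P_U M`.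
-/

open MeasureTheory
open scoped ENNReal InnerProductSpace

section InnerProductSpace

variable {𝕜 E F : Type*} [RCLike 𝕜] [NormedAddCommGroup E] [InnerProductSpace 𝕜 E]
  [NormedAddCommGroup F] [InnerProductSpace 𝕜 F]

theorem norm_le_of_norm_inner_self_le {x : E} {r : ℝ} (hr : 0 ≤ r)
    (h : ‖⟪x, x⟫_𝕜‖ ≤ r * ‖x‖) : ‖x‖ ≤ r := by
  rw [inner_self_eq_norm_sq_to_K, norm_pow, RCLike.norm_ofReal, abs_norm] at h
  nlinarith [norm_nonneg x]

theorem enorm_inner_symm (x y : E) : ‖⟪x, y⟫_𝕜‖ₑ = ‖⟪y, x⟫_𝕜‖ₑ := by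
  rw [← ofReal_norm, norm_inner_symm, ofReal_norm]

theorem Orthonormal.sum_enorm_inner_sq_le {ι : Type*} {v : ι → E} (hv : Orthonormal 𝕜 v)
    (s : Finset ι) (x : E) : ∑ i ∈ s, ‖⟪v i, x⟫_𝕜‖ₑ ^ 2 ≤ ‖x‖ₑ ^ 2 := by
  simp only [← ofReal_norm, ← ENNReal.ofReal_pow (norm_nonneg _)]
  rw [← ENNReal.ofReal_sum_of_nonneg fun i _ => by positivity]
  exact ENNReal.ofReal_le_ofReal (hv.sum_inner_products_le x)

theorem Submodule.isCompactOperator_starProjection (U : Submodule 𝕜 E) [FiniteDimensional 𝕜 U] :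
    IsCompactOperator U.starProjection :=
  (isCompactOperator_of_locallyCompactSpace_dom U.orthogonalProjectionOnto).clm_comp U.subtypeL

theorem isCompactOperator_of_forall_exists_norm_sub_le [CompleteSpace F] {M : E →L[𝕜] F} {c : ℝ}
    (h : ∀ ε > 0, ∃ T : E →L[𝕜] F, IsCompactOperator T ∧ ‖M - T‖ ≤ c * ε) :
    IsCompactOperator M := by
  refine isClosed_setOfPred_isCompactOperator.closure_subset
    (Metric.mem_closure_iff.2 fun η hη => ?_)
  obtain ⟨T, hT, hMT⟩ := h (η / (|c| + 1)) (by positivity)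
  refine ⟨T, hT, ?_⟩
  rw [dist_eq_norm]
  calc ‖M - T‖ ≤ c * (η / (|c| + 1)) := hMT
    _ ≤ |c| * (η / (|c| + 1)) := by gcongr; exact le_abs_self c
    _ < η := by
      rw [mul_div_assoc', div_lt_iff₀ (by positivity)]
      linarith

theorem isCompactOperator_of_inner_small_on_orthogonal_dom [CompleteSpace F] {M : E →L[𝕜] F}
    {c : ℝ} (hc : 0 ≤ c)
    (h : ∀ ε > 0, ∃ U : Submodule 𝕜 E, FiniteDimensional 𝕜 U ∧
      ∀ f ∈ Uᗮ, ∀ g, ‖⟪g, M f⟫_𝕜‖ ≤ c * ε * ‖f‖ * ‖g‖) :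
    IsCompactOperator M := by
  refine isCompactOperator_of_forall_exists_norm_sub_le (c := c) fun ε hε => ?_
  obtain ⟨U, _, hU⟩ := h ε hε
  refine ⟨M ∘L U.starProjection, U.isCompactOperator_starProjection.clm_comp M,
    (M - M ∘L U.starProjection).opNorm_le_bound (by positivity) fun f => ?_⟩
  have hMf : (M - M ∘L U.starProjection) f = M (Uᗮ.starProjection f) := by simp
  rw [hMf]
  calc ‖M (Uᗮ.starProjection f)‖ ≤ c * ε * ‖Uᗮ.starProjection f‖ :=
        norm_le_of_norm_inner_self_le (by positivity)
          (hU _ (Uᗮ.starProjection_apply_mem f) _)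
    _ ≤ c * ε * ‖f‖ := by gcongr; exact Uᗮ.norm_starProjection_apply_le f

theorem isCompactOperator_of_inner_small_on_orthogonal_cod [CompleteSpace F] {M : E →L[𝕜] F}
    {c : ℝ} (hc : 0 ≤ c)
    (h : ∀ ε > 0, ∃ U : Submodule 𝕜 F, FiniteDimensional 𝕜 U ∧
      ∀ f, ∀ g ∈ Uᗮ, ‖⟪g, M f⟫_𝕜‖ ≤ c * ε * ‖f‖ * ‖g‖) :
    IsCompactOperator M := by
  refine isCompactOperator_of_forall_exists_norm_sub_le (c := c) fun ε hε => ?_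
  obtain ⟨U, _, hU⟩ := h ε hε
  refine ⟨U.starProjection ∘L M, U.isCompactOperator_starProjection.comp_clm M,
    (M - U.starProjection ∘L M).opNorm_le_bound (by positivity) fun f => ?_⟩
  set y := Uᗮ.starProjection (M f)
  have hy : y ∈ Uᗮ := Uᗮ.starProjection_apply_mem _
  have hMf : (M - U.starProjection ∘L M) f = y := by simp [y]
  have hyy : ⟪M f, y⟫_𝕜 = ⟪y, y⟫_𝕜 := by
    rw [← sub_eq_zero, ← inner_sub_left]
    exact Uᗮ.starProjection_inner_eq_zero _ _ hy
  rw [hMf]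
  refine norm_le_of_norm_inner_self_le (𝕜 := 𝕜) (by positivity) ?_
  rw [← hyy, norm_inner_symm (𝕜 := 𝕜)]
  exact hU f y hy

theorem lt_apply_inv_norm_smul_iff {Q : E → ℝ≥0∞}
    (hQ_smul : ∀ (c : 𝕜) (f : E), Q (c • f) = ‖c‖ₑ ^ 2 * Q f) {f : E} (hf : f ≠ 0) {δ : ℝ≥0∞} :
    δ < Q ((‖f‖⁻¹ : 𝕜) • f) ↔ δ * ‖f‖ₑ ^ 2 < Q f := by
  have hf₀ : ‖f‖ₑ ^ 2 ≠ 0 := by simpa using hf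
  have hf_top : ‖f‖ₑ ^ 2 ≠ ⊤ := by simp
  have hc : ‖(‖f‖⁻¹ : 𝕜)‖ₑ = ‖f‖ₑ⁻¹ := by
    rw [← ofReal_norm, norm_inv, RCLike.norm_ofReal, abs_norm,
      ENNReal.ofReal_inv_of_pos (norm_pos_iff.2 hf), ofReal_norm]
  rw [hQ_smul, hc, ← ENNReal.inv_pow, mul_comm, ← div_eq_mul_inv,
    ENNReal.lt_div_iff_mul_lt (Or.inl hf₀) (Or.inl hf_top)]

theorem exists_finiteDimensional_forall_mem_orthogonal_le {Q : E → ℝ≥0∞}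
    (hQ_smul : ∀ (c : 𝕜) (f : E), Q (c • f) = ‖c‖ₑ ^ 2 * Q f) {A : ℝ≥0∞} (hA : A ≠ ⊤)
    (hQ_sum : ∀ (n : ℕ) (v : Fin n → E), Orthonormal 𝕜 v → ∑ i, Q (v i) ≤ A)
    {δ : ℝ≥0∞} (hδ : δ ≠ 0) :
    ∃ U : Submodule 𝕜 E, FiniteDimensional 𝕜 U ∧ ∀ f ∈ Uᗮ, Q f ≤ δ * ‖f‖ₑ ^ 2 := by
  -- Otherwise orthonormal families of every length with `Q > δ` on each member exist,
  -- contradicting `∑ Q ≤ A < ⊤`.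
  by_contra! h
  have hQ_zero : Q 0 = 0 := by simpa using hQ_smul 0 0
  have hfamily : ∀ n, ∃ v : Fin n → E, Orthonormal 𝕜 v ∧ ∀ i, δ < Q (v i) := by
    intro n
    induction n with
    | zero => exact ⟨![], Orthonormal.of_isEmpty _, fun i => i.elim0⟩
    | succ n ih =>
      obtain ⟨v, hv, hvQ⟩ := ih
      obtain ⟨f, hf, hQf⟩ := h (Submodule.span 𝕜 (Set.range v))
        (FiniteDimensional.span_of_finite 𝕜 (Set.finite_range v))
      have hf₀ : f ≠ 0 := by rintro rfl; simp [hQ_zero] at hQf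
      have hfv : ∀ i, ⟪f, v i⟫_𝕜 = 0 := fun i =>
        Submodule.inner_left_of_mem_orthogonal (Submodule.subset_span (Set.mem_range_self i)) hf
      refine ⟨Matrix.vecCons ((‖f‖⁻¹ : 𝕜) • f) v, orthonormal_vecCons_iff.2
        ⟨norm_smul_inv_norm hf₀, fun i => by simp [inner_smul_left, hfv], hv⟩,
        Fin.cases ((lt_apply_inv_norm_smul_iff hQ_smul hf₀).2 hQf) hvQ⟩
  obtain ⟨n, hn⟩ := ENNReal.exists_nat_mul_gt hδ hA
  obtain ⟨v, hv, hvQ⟩ := hfamily n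
  have hnδ : (n : ℝ≥0∞) * δ ≤ A := calc
    (n : ℝ≥0∞) * δ = ∑ _i : Fin n, δ := by simp
    _ ≤ ∑ i, Q (v i) := Finset.sum_le_sum fun i _ => (hvQ i).le
    _ ≤ A := hQ_sum n v hv
  exact (hn.trans_le hnδ).false

end InnerProductSpace

section Measure

variable {Ω : Type*} [MeasurableSpace Ω]

section LIntegral

variable {μ : Measure Ω}

theorem lintegral_mul_le_of_lintegral_sq_le {a b : Ω → ℝ≥0∞} (ha : AEMeasurable a μ)
    (hb : AEMeasurable b μ) {A B : ℝ≥0∞} (hA : ∫⁻ ω, a ω ^ 2 ∂μ ≤ A ^ 2)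
    (hB : ∫⁻ ω, b ω ^ 2 ∂μ ≤ B ^ 2) :
    ∫⁻ ω, a ω * b ω ∂μ ≤ A * B := by
  have hsq : ∀ x : ℝ≥0∞, x ^ (2 : ℝ) = x ^ 2 := fun x => ENNReal.rpow_ofNat x 2
  have hroot : ∀ x : ℝ≥0∞, (x ^ 2) ^ (1 / 2 : ℝ) = x := fun x => by
    rw [← hsq, ← ENNReal.rpow_mul]; norm_num
  calc ∫⁻ ω, a ω * b ω ∂μ
      ≤ (∫⁻ ω, a ω ^ (2 : ℝ) ∂μ) ^ (1 / 2 : ℝ) * (∫⁻ ω, b ω ^ (2 : ℝ) ∂μ) ^ (1 / 2 : ℝ) :=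
        ENNReal.lintegral_mul_le_Lp_mul_Lq μ .two_two ha hb
    _ ≤ (A ^ 2) ^ (1 / 2 : ℝ) * (B ^ 2) ^ (1 / 2 : ℝ) := by simp only [hsq]; gcongr
    _ = A * B := by rw [hroot, hroot]

theorem lintegral_mul_mul_le_of_ae_le {m a b : Ω → ℝ≥0∞} (ha : AEMeasurable a μ)
    (hb : AEMeasurable b μ) {C A B : ℝ≥0∞} (hm : ∀ᵐ ω ∂μ, m ω ≤ C)
    (hA : ∫⁻ ω, a ω ^ 2 ∂μ ≤ A ^ 2) (hB : ∫⁻ ω, b ω ^ 2 ∂μ ≤ B ^ 2) :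
    ∫⁻ ω, m ω * (a ω * b ω) ∂μ ≤ C * (A * B) :=
  calc ∫⁻ ω, m ω * (a ω * b ω) ∂μ ≤ ∫⁻ ω, C * (a ω * b ω) ∂μ :=
        lintegral_mono_ae (hm.mono fun ω hω => by gcongr)
    _ = C * ∫⁻ ω, a ω * b ω ∂μ := lintegral_const_mul'' _ (ha.mul hb)
    _ ≤ C * (A * B) := by gcongr; exact lintegral_mul_le_of_lintegral_sq_le ha hb hA hB

theorem lintegral_mul_mul_le_of_le_off {m a b : Ω → ℝ≥0∞} (ha : AEMeasurable a μ)
    (hb : AEMeasurable b μ) {K : Set Ω} (hK : MeasurableSet K) {C ε A B A' B' : ℝ≥0∞}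
    (hmC : ∀ᵐ ω ∂μ, m ω ≤ C) (hmε : ∀ᵐ ω ∂μ, ω ∉ K → m ω ≤ ε)
    (hA : ∫⁻ ω, a ω ^ 2 ∂μ ≤ A ^ 2) (hB : ∫⁻ ω, b ω ^ 2 ∂μ ≤ B ^ 2)
    (hA' : ∫⁻ ω in K, a ω ^ 2 ∂μ ≤ A' ^ 2) (hB' : ∫⁻ ω in K, b ω ^ 2 ∂μ ≤ B' ^ 2) :
    ∫⁻ ω, m ω * (a ω * b ω) ∂μ ≤ ε * (A * B) + C * (A' * B') := by
  rw [← lintegral_add_compl _ hK, add_comm]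
  refine add_le_add (lintegral_mul_mul_le_of_ae_le ha.restrict hb.restrict ?_
    ((setLIntegral_le_lintegral _ _).trans hA) ((setLIntegral_le_lintegral _ _).trans hB))
    (lintegral_mul_mul_le_of_ae_le ha.restrict hb.restrict (ae_restrict_of_ae hmC) hA' hB')
  filter_upwards [ae_restrict_of_ae hmε, ae_restrict_mem hK.compl] with ω hω hωK using hω hωK

end LIntegral

structure IsBesselMap (𝕜 : Type*) {E : Type*} [RCLike 𝕜] [NormedAddCommGroup E]
    [InnerProductSpace 𝕜 E] (μ : Measure Ω) (F : Ω → E) (B : ℝ) : Prop where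
  measurable_inner : ∀ f : E, Measurable fun ω => ⟪F ω, f⟫_𝕜
  lintegral_le : ∀ f : E, ∫⁻ ω, ‖⟪F ω, f⟫_𝕜‖ₑ ^ 2 ∂μ ≤ ENNReal.ofReal (B * ‖f‖ ^ 2)

section Bessel

variable {𝕜 E : Type*} [RCLike 𝕜] [NormedAddCommGroup E] [InnerProductSpace 𝕜 E] {μ : Measure Ω}

namespace IsBesselMap

variable {F : Ω → E} {B : ℝ}

theorem lintegral_le_sq (hF : IsBesselMap 𝕜 μ F B) (f : E) :
    ∫⁻ ω, ‖⟪F ω, f⟫_𝕜‖ₑ ^ 2 ∂μ ≤ ENNReal.ofReal (√B * ‖f‖) ^ 2 := by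
  refine (hF.lintegral_le f).trans ?_
  rcases le_total B 0 with hB | hB
  · rw [ENNReal.ofReal_of_nonpos (mul_nonpos_of_nonpos_of_nonneg hB (sq_nonneg _))]
    exact bot_le
  · rw [← ENNReal.ofReal_pow (by positivity), mul_pow, Real.sq_sqrt hB]

theorem setLIntegral_le_sq (hF : IsBesselMap 𝕜 μ F B) (K : Set Ω) (f : E) :
    ∫⁻ ω in K, ‖⟪F ω, f⟫_𝕜‖ₑ ^ 2 ∂μ ≤ ENNReal.ofReal (√B * ‖f‖) ^ 2 :=
  (setLIntegral_le_lintegral _ _).trans (hF.lintegral_le_sq f)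

theorem aemeasurable_enorm_inner (hF : IsBesselMap 𝕜 μ F B) (f : E) {ν : Measure Ω} :
    AEMeasurable (fun ω => ‖⟪F ω, f⟫_𝕜‖ₑ) ν :=
  (hF.measurable_inner f).enorm.aemeasurable

end IsBesselMap

theorem norm_integral_mul_inner_mul_inner_le {F G : Ω → E} {B_F B_G : ℝ}
    (hF : IsBesselMap 𝕜 μ F B_F) (hG : IsBesselMap 𝕜 μ G B_G) {m : Ω → 𝕜} {C ε : ℝ}
    (hC : 0 ≤ C) (hε : 0 ≤ ε) (hmC : ∀ᵐ ω ∂μ, ‖m ω‖ ≤ C) {K : Set Ω} (hK : MeasurableSet K)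
    (hmK : ∀ᵐ ω ∂μ, ω ∉ K → ‖m ω‖ ≤ ε) {f g : E} {a b : ℝ} (ha : 0 ≤ a) (hb : 0 ≤ b)
    (hfK : ∫⁻ ω in K, ‖⟪F ω, f⟫_𝕜‖ₑ ^ 2 ∂μ ≤ ENNReal.ofReal a ^ 2)
    (hgK : ∫⁻ ω in K, ‖⟪G ω, g⟫_𝕜‖ₑ ^ 2 ∂μ ≤ ENNReal.ofReal b ^ 2) :
    ‖∫ ω, m ω * ⟪F ω, f⟫_𝕜 * ⟪g, G ω⟫_𝕜 ∂μ‖ ≤ ε * (√B_F * ‖f‖) * (√B_G * ‖g‖) + C * a * b := by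
  have henorm : ∀ ω, ‖m ω * ⟪F ω, f⟫_𝕜 * ⟪g, G ω⟫_𝕜‖ₑ
      = ‖m ω‖ₑ * (‖⟪F ω, f⟫_𝕜‖ₑ * ‖⟪G ω, g⟫_𝕜‖ₑ) := fun ω => by
    rw [enorm_mul, enorm_mul, mul_assoc, enorm_inner_symm g]
  have hmC' : ∀ᵐ ω ∂μ, ‖m ω‖ₑ ≤ ENNReal.ofReal C :=
    hmC.mono fun ω hω => by rw [← ofReal_norm]; exact ENNReal.ofReal_le_ofReal hω
  have hmK' : ∀ᵐ ω ∂μ, ω ∉ K → ‖m ω‖ₑ ≤ ENNReal.ofReal ε :=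
    hmK.mono fun ω hω hωK => by rw [← ofReal_norm]; exact ENNReal.ofReal_le_ofReal (hω hωK)
  have key := (enorm_integral_le_lintegral_enorm _).trans <| (lintegral_congr henorm).trans_le <|
    lintegral_mul_mul_le_of_le_off (hF.aemeasurable_enorm_inner f) (hG.aemeasurable_enorm_inner g)
      hK hmC' hmK' (hF.lintegral_le_sq f) (hG.lintegral_le_sq g) hfK hgK
  rw [← ofReal_norm, ← ENNReal.ofReal_mul (by positivity), ← ENNReal.ofReal_mul hε,
    ← ENNReal.ofReal_mul ha, ← ENNReal.ofReal_mul hC, ← ENNReal.ofReal_add (by positivity)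
      (by positivity), ENNReal.ofReal_le_ofReal_iff (by positivity)] at key
  linarith

end Bessel

section BoundedFiniteRank

variable {𝕜 E : Type*} [RCLike 𝕜] [NormedAddCommGroup E] [InnerProductSpace 𝕜 E]
variable {μ : Measure Ω} {F : Ω → E} {L : ℝ}

theorem sum_setLIntegral_enorm_inner_sq_le (hF_meas : ∀ f : E, Measurable fun ω => ⟪F ω, f⟫_𝕜)
    (hFL : ∀ᵐ ω ∂μ, ‖F ω‖ ≤ L) (K : Set Ω) {ι : Type*} {v : ι → E} (hv : Orthonormal 𝕜 v)
    (s : Finset ι) :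
    ∑ i ∈ s, ∫⁻ ω in K, ‖⟪F ω, v i⟫_𝕜‖ₑ ^ 2 ∂μ ≤ ENNReal.ofReal L ^ 2 * μ K := by
  rw [← lintegral_finsetSum' _ fun i _ => (hF_meas (v i)).enorm.pow_const 2 |>.aemeasurable,
    ← setLIntegral_const]
  refine lintegral_mono_ae ((ae_restrict_of_ae hFL).mono fun ω hω => ?_)
  calc ∑ i ∈ s, ‖⟪F ω, v i⟫_𝕜‖ₑ ^ 2 = ∑ i ∈ s, ‖⟪v i, F ω⟫_𝕜‖ₑ ^ 2 := by
        simp only [enorm_inner_symm (F ω)]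
    _ ≤ ‖F ω‖ₑ ^ 2 := hv.sum_enorm_inner_sq_le s (F ω)
    _ ≤ ENNReal.ofReal L ^ 2 := by
        rw [← ofReal_norm]; gcongr

theorem exists_finiteDimensional_setLIntegral_enorm_inner_sq_le
    (hF_meas : ∀ f : E, Measurable fun ω => ⟪F ω, f⟫_𝕜) (hFL : ∀ᵐ ω ∂μ, ‖F ω‖ ≤ L)
    {K : Set Ω} (hK : μ K ≠ ⊤) {ε : ℝ} (hε : 0 < ε) :
    ∃ U : Submodule 𝕜 E, FiniteDimensional 𝕜 U ∧
      ∀ f ∈ Uᗮ, ∫⁻ ω in K, ‖⟪F ω, f⟫_𝕜‖ₑ ^ 2 ∂μ ≤ ENNReal.ofReal (ε * ‖f‖) ^ 2 := by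
  have hQ_smul (c : 𝕜) (f : E) : ∫⁻ ω in K, ‖⟪F ω, c • f⟫_𝕜‖ₑ ^ 2 ∂μ
      = ‖c‖ₑ ^ 2 * ∫⁻ ω in K, ‖⟪F ω, f⟫_𝕜‖ₑ ^ 2 ∂μ := by
    simp_rw [inner_smul_right, enorm_mul, mul_pow]
    exact lintegral_const_mul' _ _ (by simp)
  obtain ⟨U, hU, hUK⟩ := exists_finiteDimensional_forall_mem_orthogonal_le
    (Q := fun f => ∫⁻ ω in K, ‖⟪F ω, f⟫_𝕜‖ₑ ^ 2 ∂μ) hQ_smul (ENNReal.mul_ne_top (by simp) hK)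
    (fun n v hv => sum_setLIntegral_enorm_inner_sq_le hF_meas hFL K hv Finset.univ)
    (pow_ne_zero 2 (ENNReal.ofReal_pos.2 hε).ne')
  refine ⟨U, hU, fun f hf => (hUK f hf).trans_eq ?_⟩
  rw [ENNReal.ofReal_mul hε.le, ofReal_norm, mul_pow]

end BoundedFiniteRank

end Measure

local notation "⟪" x ", " y "⟫" => @inner ℂ _ _ x y

/-- In Mathlib's convention the paper's `⟨x, y⟩` is `⟪y, x⟫`. -/
theorem multiplier_compact_of_vanishing_symbol_general
    {Ω : Type} [MeasurableSpace Ω] (μ : Measure Ω)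
    {H : Type} [NormedAddCommGroup H] [InnerProductSpace ℂ H] [CompleteSpace H]
    (F G : Ω → H) (B_F B_G : ℝ)
    (hF_meas : ∀ f : H, Measurable fun ω => ⟪F ω, f⟫)
    (hF_bessel : ∀ f : H,
      ∫⁻ ω, (‖⟪F ω, f⟫‖₊ : ENNReal) ^ 2 ∂μ ≤ ENNReal.ofReal (B_F * ‖f‖ ^ 2))
    (hG_meas : ∀ f : H, Measurable fun ω => ⟪G ω, f⟫)
    (hG_bessel : ∀ f : H,
      ∫⁻ ω, (‖⟪G ω, f⟫‖₊ : ENNReal) ^ 2 ∂μ ≤ ENNReal.ofReal (B_G * ‖f‖ ^ 2))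
    (L : ℝ)
    (hbounded : (∀ᵐ ω ∂μ, ‖F ω‖ ≤ L) ∨ (∀ᵐ ω ∂μ, ‖G ω‖ ≤ L))
    (m : Ω → ℂ)
    (hm_bdd : ∃ C : ℝ, ∀ᵐ ω ∂μ, ‖m ω‖ ≤ C)
    (hm_vanish : ∀ ε : ℝ, 0 < ε → ∃ K : Set Ω, MeasurableSet K ∧ μ K < ⊤ ∧
      ∀ᵐ ω ∂μ, ω ∉ K → ‖m ω‖ ≤ ε)
    (M : H →L[ℂ] H)
    (hM : ∀ f g : H, ⟪g, M f⟫ = ∫ ω, m ω * ⟪F ω, f⟫ * ⟪g, G ω⟫ ∂μ) :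
    IsCompactOperator M := by
  have hF : IsBesselMap ℂ μ F B_F := ⟨hF_meas, hF_bessel⟩
  have hG : IsBesselMap ℂ μ G B_G := ⟨hG_meas, hG_bessel⟩
  obtain ⟨C, hmC⟩ := hm_bdd
  replace hmC : ∀ᵐ ω ∂μ, ‖m ω‖ ≤ max C 0 := hmC.mono fun _ h => h.trans (le_max_left _ _)
  rcases hbounded with hFL | hGL
  · refine isCompactOperator_of_inner_small_on_orthogonal_dom
      (c := (√B_F + max C 0) * √B_G) (by positivity) fun ε hε => ?_
    obtain ⟨K, hK, hKμ, hmK⟩ := hm_vanish ε hε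
    obtain ⟨U, hU, hUK⟩ :=
      exists_finiteDimensional_setLIntegral_enorm_inner_sq_le hF_meas hFL hKμ.ne hε
    refine ⟨U, hU, fun f hf g => ?_⟩
    rw [hM]
    refine (norm_integral_mul_inner_mul_inner_le hF hG (le_max_right _ _) hε.le hmC hK hmK
      (by positivity) (by positivity) (hUK f hf) (hG.setLIntegral_le_sq K g)).trans_eq ?_
    ring
  · refine isCompactOperator_of_inner_small_on_orthogonal_cod
      (c := √B_F * (√B_G + max C 0)) (by positivity) fun ε hε => ?_
    obtain ⟨K, hK, hKμ, hmK⟩ := hm_vanish ε hε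
    obtain ⟨U, hU, hUK⟩ :=
      exists_finiteDimensional_setLIntegral_enorm_inner_sq_le hG_meas hGL hKμ.ne hε
    refine ⟨U, hU, fun f g hg => ?_⟩
    rw [hM]
    refine (norm_integral_mul_inner_mul_inner_le hF hG (le_max_right _ _) hε.le hmC hK hmK
      (by positivity) (by positivity) (hF.setLIntegral_le_sq K f) (hUK g hg)).trans_eq ?_
    ring

/-- If `F, G` are Bessel mappings, one of which is (essentially) norm bounded, and `m` is an
essentially bounded measurable symbol that vanishes at infinity, then the continuous
Bessel multiplier `M_{m,F,G}` is a compact operator.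
In Mathlib's convention the paper's `⟨x, y⟩` is `⟪y, x⟫`. -/
theorem multiplier_compact_of_vanishing_symbol
    {Ω : Type} [MeasurableSpace Ω] (μ : Measure Ω)
    {H : Type} [NormedAddCommGroup H] [InnerProductSpace ℂ H] [CompleteSpace H]
    (F G : Ω → H) (B_F B_G : ℝ) (hBF : 0 < B_F) (hBG : 0 < B_G)
    (hF_meas : ∀ f : H, Measurable fun ω => ⟪F ω, f⟫)
    (hF_bessel : ∀ f : H,
      ∫⁻ ω, (‖⟪F ω, f⟫‖₊ : ENNReal) ^ 2 ∂μ ≤ ENNReal.ofReal (B_F * ‖f‖ ^ 2))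
    (hG_meas : ∀ f : H, Measurable fun ω => ⟪G ω, f⟫)
    (hG_bessel : ∀ f : H,
      ∫⁻ ω, (‖⟪G ω, f⟫‖₊ : ENNReal) ^ 2 ∂μ ≤ ENNReal.ofReal (B_G * ‖f‖ ^ 2))
    (L : ℝ) (hL : 0 < L)
    (hbounded : (∀ᵐ ω ∂μ, ‖F ω‖ ≤ L) ∨ (∀ᵐ ω ∂μ, ‖G ω‖ ≤ L))
    (m : Ω → ℂ) (hm_meas : Measurable m)
    (hm_bdd : ∃ C : ℝ, ∀ᵐ ω ∂μ, ‖m ω‖ ≤ C)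
    (hm_vanish : ∀ ε : ℝ, 0 < ε → ∃ K : Set Ω, MeasurableSet K ∧ μ K < ⊤ ∧
      ∀ᵐ ω ∂μ, ω ∉ K → ‖m ω‖ ≤ ε)
    (M : H →L[ℂ] H)
    (hM : ∀ f g : H, ⟪g, M f⟫ = ∫ ω, m ω * ⟪F ω, f⟫ * ⟪g, G ω⟫ ∂μ) :
    IsCompactOperator M :=
  multiplier_compact_of_vanishing_symbol_general μ F G B_F B_G hF_meas hF_bessel hG_meas hG_bessel L
    hbounded m hm_bdd hm_vanish M hM
end

section
/- Let F and G be Bessel mappings for H with respect to (Ω, μ) that are norm bounded by L_F and L_G respectively, and let m ∈ L¹(Ω, μ). Then there exists a bounded linear operator M : H → H such that for all f, g ∈ H the function ω ↦ m(ω)⟨f, F(ω)⟩⟨G(ω), g⟩ is integrable and ⟨M f, g⟩ = ∫_Ω m(ω)⟨f, F(ω)⟩⟨G(ω), g⟩ dμ(ω); moreover ‖M‖ ≤ ‖m‖₁ L_F L_G. -/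
/-!
For each `ω` the rank-one operator `f ↦ m ω ⟪F ω, f⟫ G ω` has norm `|m ω| ‖F ω‖ ‖G ω‖`, which is
dominated by the integrable function `|m ω| L_F L_G`. Integrating the associated sesquilinear
forms therefore gives a bounded sesquilinear form of norm at most `‖m‖₁ L_F L_G`, and the
Riesz representation theorem turns it into the multiplier.
-/

open MeasureTheory
open scoped InnerProductSpace

section WeakIntegralForm

variable {Ω : Type*} [MeasurableSpace Ω] {μ : Measure Ω}
  {𝕜 : Type*} [RCLike 𝕜] {E F : Type*}
  [NormedAddCommGroup E] [NormedSpace 𝕜 E] [NormedAddCommGroup F] [NormedSpace 𝕜 F]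
  {b : Ω → E →L⋆[𝕜] F →L[𝕜] 𝕜} {k : Ω → ℝ}

theorem ae_norm_apply_apply_le (hb : ∀ᵐ ω ∂μ, ‖b ω‖ ≤ k ω) (x : E) (y : F) :
    ∀ᵐ ω ∂μ, ‖b ω x y‖ ≤ k ω * (‖x‖ * ‖y‖) := by
  filter_upwards [hb] with ω hω
  calc ‖b ω x y‖ ≤ ‖b ω‖ * ‖x‖ * ‖y‖ := (b ω).le_opNorm₂ x y
    _ ≤ k ω * (‖x‖ * ‖y‖) := by rw [mul_assoc]; gcongr

theorem integrable_apply_apply_of_norm_le (hk : Integrable k μ)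
    (hb_meas : ∀ x y, AEStronglyMeasurable (fun ω => b ω x y) μ)
    (hb : ∀ᵐ ω ∂μ, ‖b ω‖ ≤ k ω) (x : E) (y : F) :
    Integrable (fun ω => b ω x y) μ :=
  (hk.mul_const _).mono' (hb_meas x y) (ae_norm_apply_apply_le hb x y)

theorem norm_integral_apply_apply_le (hk : Integrable k μ) (hb : ∀ᵐ ω ∂μ, ‖b ω‖ ≤ k ω)
    (x : E) (y : F) : ‖∫ ω, b ω x y ∂μ‖ ≤ (∫ ω, k ω ∂μ) * ‖x‖ * ‖y‖ := by
  calc ‖∫ ω, b ω x y ∂μ‖ ≤ ∫ ω, k ω * (‖x‖ * ‖y‖) ∂μ :=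
        norm_integral_le_of_norm_le (hk.mul_const _) (ae_norm_apply_apply_le hb x y)
    _ = (∫ ω, k ω ∂μ) * ‖x‖ * ‖y‖ := by rw [integral_mul_const, mul_assoc]

variable (μ b) in
noncomputable def weakIntegralForm (hk : Integrable k μ)
    (hb_meas : ∀ x y, AEStronglyMeasurable (fun ω => b ω x y) μ)
    (hb : ∀ᵐ ω ∂μ, ‖b ω‖ ≤ k ω) : E →L⋆[𝕜] F →L[𝕜] 𝕜 :=
  have hint := integrable_apply_apply_of_norm_le hk hb_meas hb
  LinearMap.mkContinuous₂
    (LinearMap.mk₂'ₛₗ (starRingEnd 𝕜) (RingHom.id 𝕜) (fun x y => ∫ ω, b ω x y ∂μ)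
      (fun x x' y => by
        simp only [map_add, add_apply]
        exact integral_add (hint x y) (hint x' y))
      (fun c x y => by
        simp only [map_smulₛₗ, smul_apply]
        exact integral_smul _ _)
      (fun x y y' => by
        simp only [map_add]
        exact integral_add (hint x y) (hint x y'))
      (fun c x y => by
        simp only [map_smul]
        exact integral_smul _ _))
    (∫ ω, k ω ∂μ) (norm_integral_apply_apply_le hk hb)

variable (hk : Integrable k μ) (hb_meas : ∀ x y, AEStronglyMeasurable (fun ω => b ω x y) μ)
  (hb : ∀ᵐ ω ∂μ, ‖b ω‖ ≤ k ω)

theorem weakIntegralForm_apply (x : E) (y : F) :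
    weakIntegralForm μ b hk hb_meas hb x y = ∫ ω, b ω x y ∂μ :=
  rfl

theorem norm_weakIntegralForm_le : ‖weakIntegralForm μ b hk hb_meas hb‖ ≤ ∫ ω, k ω ∂μ := by
  have hk_nonneg : 0 ≤ ∫ ω, k ω ∂μ :=
    integral_nonneg_of_ae (hb.mono fun ω hω => (norm_nonneg (b ω)).trans hω)
  exact LinearMap.mkContinuous₂_norm_le _ hk_nonneg (norm_integral_apply_apply_le hk hb)

end WeakIntegralForm

section WeakIntegralOperator

variable {𝕜 : Type*} [RCLike 𝕜] {E : Type*} [NormedAddCommGroup E] [InnerProductSpace 𝕜 E]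

theorem inner_smul_rankOne_apply (c : 𝕜) (u v f g : E) :
    ⟪g, (c • InnerProductSpace.rankOne 𝕜 v u) f⟫_𝕜 = c * ⟪u, f⟫_𝕜 * ⟪g, v⟫_𝕜 := by
  simp only [smul_apply, InnerProductSpace.rankOne_apply, inner_smul_right]
  ring

theorem ContinuousLinearMap.norm_toSesqForm_le (A : E →L[𝕜] E) : ‖toSesqForm A‖ ≤ ‖A‖ :=
  opNorm_le_bound _ (norm_nonneg A) fun _ => toSesqForm_apply_norm_le

variable [CompleteSpace E]

theorem InnerProductSpace.norm_continuousLinearMapOfBilin_le (B : E →L⋆[𝕜] E →L[𝕜] 𝕜) :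
    ‖continuousLinearMapOfBilin B‖ ≤ ‖B‖ :=
  ContinuousLinearMap.opNorm_le_bound _ (norm_nonneg B) fun v => by
    simpa [continuousLinearMapOfBilin] using B.le_opNorm v

/-- No strong measurability of `A` is assumed: `E →L[𝕜] E` is not separable in general, so the
Bochner integral `∫ ω, A ω ∂μ` need not exist; `M` is its weak counterpart. -/
theorem exists_inner_eq_integral_of_norm_le {Ω : Type*} [MeasurableSpace Ω] {μ : Measure Ω}
    (A : Ω → E →L[𝕜] E) {k : Ω → ℝ} (hk : Integrable k μ)
    (hA_meas : ∀ f g, AEStronglyMeasurable (fun ω => ⟪g, A ω f⟫_𝕜) μ)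
    (hA : ∀ᵐ ω ∂μ, ‖A ω‖ ≤ k ω) :
    ∃ M : E →L[𝕜] E,
      (∀ f g, Integrable (fun ω => ⟪g, A ω f⟫_𝕜) μ ∧ ⟪g, M f⟫_𝕜 = ∫ ω, ⟪g, A ω f⟫_𝕜 ∂μ) ∧
      ‖M‖ ≤ ∫ ω, k ω ∂μ := by
  set b : Ω → E →L⋆[𝕜] E →L[𝕜] 𝕜 := fun ω => ContinuousLinearMap.toSesqForm (A ω)
  have hb_meas : ∀ g f, AEStronglyMeasurable (fun ω => b ω g f) μ := fun g f => hA_meas f g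
  have hb : ∀ᵐ ω ∂μ, ‖b ω‖ ≤ k ω :=
    hA.mono fun ω hω => (A ω).norm_toSesqForm_le.trans hω
  set B := weakIntegralForm μ b hk hb_meas hb
  -- `⟪B♯ g, f⟫ = B g f`, hence `⟪g, (B♯)† f⟫ = B g f`.
  refine ⟨(InnerProductSpace.continuousLinearMapOfBilin B).adjoint, fun f g => ⟨?_, ?_⟩, ?_⟩
  · exact integrable_apply_apply_of_norm_le hk hb_meas hb g f
  · rw [ContinuousLinearMap.adjoint_inner_right,
      InnerProductSpace.continuousLinearMapOfBilin_apply, weakIntegralForm_apply]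
    rfl
  · rw [LinearIsometryEquiv.norm_map]
    exact (InnerProductSpace.norm_continuousLinearMapOfBilin_le B).trans
      (norm_weakIntegralForm_le hk hb_meas hb)

end WeakIntegralOperator

local notation "⟪" x ", " y "⟫" => @inner ℂ _ _ x y

/-- In Mathlib's convention the paper's `⟨x, y⟩` is `⟪y, x⟫`. -/
theorem multiplier_bounded_of_L1_symbol_general
    {Ω : Type} [MeasurableSpace Ω] (μ : Measure Ω)
    {H : Type} [NormedAddCommGroup H] [InnerProductSpace ℂ H] [CompleteSpace H]
    (F G : Ω → H)
    (hF_meas : ∀ f : H, Measurable fun ω => ⟪F ω, f⟫)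
    (hG_meas : ∀ f : H, Measurable fun ω => ⟪G ω, f⟫)
    (L_F L_G : ℝ)
    (hF_bdd : ∀ᵐ ω ∂μ, ‖F ω‖ ≤ L_F)
    (hG_bdd : ∀ᵐ ω ∂μ, ‖G ω‖ ≤ L_G)
    (m : Ω → ℂ) (hm : Integrable m μ) :
    ∃ M : H →L[ℂ] H,
      (∀ f g : H,
        Integrable (fun ω => m ω * ⟪F ω, f⟫ * ⟪g, G ω⟫) μ ∧
        ⟪g, M f⟫ = ∫ ω, m ω * ⟪F ω, f⟫ * ⟪g, G ω⟫ ∂μ) ∧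
      ‖M‖ ≤ (∫ ω, ‖m ω‖ ∂μ) * L_F * L_G := by
  set A : Ω → H →L[ℂ] H := fun ω => m ω • InnerProductSpace.rankOne ℂ (G ω) (F ω)
  have hA_meas : ∀ f g, AEStronglyMeasurable (fun ω => ⟪g, A ω f⟫) μ := fun f g => by
    have hG_meas' : Measurable fun ω => ⟪g, G ω⟫ := by
      simpa only [Function.comp_def, inner_conj_symm] using
        RCLike.continuous_conj.measurable.comp (hG_meas g)
    simp only [A, inner_smul_rankOne_apply]
    exact (hm.aestronglyMeasurable.mul (hF_meas f).aestronglyMeasurable).mul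
      hG_meas'.aestronglyMeasurable
  have hA : ∀ᵐ ω ∂μ, ‖A ω‖ ≤ ‖m ω‖ * (L_F * L_G) := by
    filter_upwards [hF_bdd, hG_bdd] with ω hFω hGω
    rw [norm_smul, InnerProductSpace.norm_rankOne, mul_comm (‖G ω‖)]
    gcongr
    exact (norm_nonneg _).trans hFω
  obtain ⟨M, hM, hM_norm⟩ :=
    exists_inner_eq_integral_of_norm_le A (hm.norm.mul_const _) hA_meas hA
  simp only [A, inner_smul_rankOne_apply] at hM
  refine ⟨M, hM, ?_⟩
  rwa [integral_mul_const, ← mul_assoc] at hM_norm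

/-- If `F, G` are norm-bounded Bessel mappings with norm bounds `L_F, L_G` and `m ∈ L¹(Ω, μ)`,
then the continuous multiplier `M_{m,F,G}` is a well defined bounded operator with
`‖M‖ ≤ ‖m‖₁ L_F L_G`.  In Mathlib's convention the paper's `⟨x, y⟩` is `⟪y, x⟫`. -/
theorem multiplier_bounded_of_L1_symbol
    {Ω : Type} [MeasurableSpace Ω] (μ : Measure Ω)
    {H : Type} [NormedAddCommGroup H] [InnerProductSpace ℂ H] [CompleteSpace H]
    (F G : Ω → H) (B_F B_G : ℝ) (hBF : 0 < B_F) (hBG : 0 < B_G)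
    (hF_meas : ∀ f : H, Measurable fun ω => ⟪F ω, f⟫)
    (hF_bessel : ∀ f : H,
      ∫⁻ ω, (‖⟪F ω, f⟫‖₊ : ENNReal) ^ 2 ∂μ ≤ ENNReal.ofReal (B_F * ‖f‖ ^ 2))
    (hG_meas : ∀ f : H, Measurable fun ω => ⟪G ω, f⟫)
    (hG_bessel : ∀ f : H,
      ∫⁻ ω, (‖⟪G ω, f⟫‖₊ : ENNReal) ^ 2 ∂μ ≤ ENNReal.ofReal (B_G * ‖f‖ ^ 2))
    (L_F L_G : ℝ)
    (hF_bdd : ∀ᵐ ω ∂μ, ‖F ω‖ ≤ L_F)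
    (hG_bdd : ∀ᵐ ω ∂μ, ‖G ω‖ ≤ L_G)
    (m : Ω → ℂ) (hm : Integrable m μ) :
    ∃ M : H →L[ℂ] H,
      (∀ f g : H,
        Integrable (fun ω => m ω * ⟪F ω, f⟫ * ⟪g, G ω⟫) μ ∧
        ⟪g, M f⟫ = ∫ ω, m ω * ⟪F ω, f⟫ * ⟪g, G ω⟫ ∂μ) ∧
      ‖M‖ ≤ (∫ ω, ‖m ω‖ ∂μ) * L_F * L_G :=
  multiplier_bounded_of_L1_symbol_general μ F G hF_meas hG_meas L_F L_G hF_bdd hG_bdd m hm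
end

section
/- Let F and G be Bessel mappings for H with respect to (Ω, μ) that are norm bounded by L_F and L_G respectively, let m ∈ L¹(Ω, μ), and let M : H → H be a bounded operator satisfying ⟨M f, g⟩ = ∫_Ω m(ω)⟨f, F(ω)⟩⟨G(ω), g⟩ dμ(ω) for all f, g ∈ H. Then for every orthonormal (Hilbert) basis (e_i)_{i∈I} of H one has ∑_{i∈I} |⟨M e_i, e_i⟩| ≤ ‖m‖₁ L_F L_G; in particular M is a trace class operator. -/
/-!
Expanding `⟨M e_i, e_i⟩` through the integral representation of `M` and summing over a finite set
of basis vectors, the integrand becomes `|m(ω)| ∑_i |⟨e_i, F(ω)⟩| |⟨G(ω), e_i⟩|`. By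
Cauchy–Schwarz and Bessel's inequality this is at most `|m(ω)| ‖F(ω)‖ ‖G(ω)‖ ≤ |m(ω)| L_F L_G`,
so every finite partial sum of `∑_i |⟨M e_i, e_i⟩|` is bounded by `‖m‖₁ L_F L_G`.
-/

open MeasureTheory

-- Mathlib's inner product is conjugate-linear in its first slot: the paper's `⟨x, y⟩` is `⟪y, x⟫`.
local notation "⟪" x ", " y "⟫" => @inner ℂ _ _ x y

theorem Orthonormal.sum_norm_inner_mul_norm_inner_le {𝕜 E ι : Type*} [RCLike 𝕜]
    [NormedAddCommGroup E] [InnerProductSpace 𝕜 E] {v : ι → E} (hv : Orthonormal 𝕜 v)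
    (s : Finset ι) (x y : E) :
    ∑ i ∈ s, ‖inner 𝕜 (v i) x‖ * ‖inner 𝕜 (v i) y‖ ≤ ‖x‖ * ‖y‖ :=
  calc ∑ i ∈ s, ‖inner 𝕜 (v i) x‖ * ‖inner 𝕜 (v i) y‖
      ≤ √(∑ i ∈ s, ‖inner 𝕜 (v i) x‖ ^ 2) * √(∑ i ∈ s, ‖inner 𝕜 (v i) y‖ ^ 2) :=
        Real.sum_mul_le_sqrt_mul_sqrt s _ _
    _ ≤ √(‖x‖ ^ 2) * √(‖y‖ ^ 2) := by
        gcongr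
        exacts [hv.sum_inner_products_le x, hv.sum_inner_products_le y]
    _ = ‖x‖ * ‖y‖ := by
        rw [Real.sqrt_sq (norm_nonneg x), Real.sqrt_sq (norm_nonneg y)]

section IntegralRepresentation

variable {𝕜 Ω E : Type*} [RCLike 𝕜] [MeasurableSpace Ω] {μ : Measure Ω}
  [NormedAddCommGroup E] [InnerProductSpace 𝕜 E]
  {F G : Ω → E} {m : Ω → 𝕜} {M : E →L[𝕜] E}

theorem norm_inner_apply_le_integral_of_eq_integral
    (hM : ∀ f g : E, inner 𝕜 g (M f) = ∫ ω, m ω * inner 𝕜 (F ω) f * inner 𝕜 g (G ω) ∂μ)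
    (f g : E) :
    ‖inner 𝕜 g (M f)‖ ≤ ∫ ω, ‖m ω‖ * ‖inner 𝕜 (F ω) f‖ * ‖inner 𝕜 g (G ω)‖ ∂μ := by
  simpa only [hM, norm_mul] using norm_integral_le_integral_norm
    (fun ω => m ω * inner 𝕜 (F ω) f * inner 𝕜 g (G ω))

theorem Orthonormal.sum_norm_inner_apply_le_of_eq_integral {ι : Type*} {v : ι → E}
    (hv : Orthonormal 𝕜 v) {L_F L_G : ℝ} (hF_bdd : ∀ᵐ ω ∂μ, ‖F ω‖ ≤ L_F)
    (hG_bdd : ∀ᵐ ω ∂μ, ‖G ω‖ ≤ L_G) (hm : Integrable m μ)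
    (hM_int : ∀ f g : E, Integrable (fun ω => m ω * inner 𝕜 (F ω) f * inner 𝕜 g (G ω)) μ)
    (hM : ∀ f g : E, inner 𝕜 g (M f) = ∫ ω, m ω * inner 𝕜 (F ω) f * inner 𝕜 g (G ω) ∂μ)
    (s : Finset ι) :
    ∑ i ∈ s, ‖inner 𝕜 (v i) (M (v i))‖ ≤ (∫ ω, ‖m ω‖ ∂μ) * L_F * L_G := by
  have hint : ∀ i, Integrable
      (fun ω => ‖m ω‖ * ‖inner 𝕜 (F ω) (v i)‖ * ‖inner 𝕜 (v i) (G ω)‖) μ := fun i => by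
    simpa only [norm_mul] using (hM_int (v i) (v i)).norm
  calc ∑ i ∈ s, ‖inner 𝕜 (v i) (M (v i))‖
      ≤ ∑ i ∈ s, ∫ ω, ‖m ω‖ * ‖inner 𝕜 (F ω) (v i)‖ * ‖inner 𝕜 (v i) (G ω)‖ ∂μ :=
        Finset.sum_le_sum fun i _ => norm_inner_apply_le_integral_of_eq_integral hM _ _
    _ = ∫ ω, ∑ i ∈ s, ‖m ω‖ * ‖inner 𝕜 (F ω) (v i)‖ * ‖inner 𝕜 (v i) (G ω)‖ ∂μ :=
        (integral_finsetSum s fun i _ => hint i).symm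
    _ ≤ ∫ ω, ‖m ω‖ * (L_F * L_G) ∂μ := by
        refine integral_mono_ae (integrable_finsetSum s fun i _ => hint i)
          (hm.norm.mul_const _) ?_
        filter_upwards [hF_bdd, hG_bdd] with ω hF hG
        simp_rw [mul_assoc, ← Finset.mul_sum, norm_inner_symm (F ω)]
        gcongr
        calc _ ≤ ‖F ω‖ * ‖G ω‖ := hv.sum_norm_inner_mul_norm_inner_le s (F ω) (G ω)
          _ ≤ L_F * L_G := mul_le_mul hF hG (norm_nonneg _) ((norm_nonneg _).trans hF)
    _ = (∫ ω, ‖m ω‖ ∂μ) * L_F * L_G := by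
        rw [integral_mul_const, mul_assoc]

end IntegralRepresentation

theorem multiplier_trace_class_of_L1_symbol_general
    {Ω : Type} [MeasurableSpace Ω] (μ : Measure Ω)
    {H : Type} [NormedAddCommGroup H] [InnerProductSpace ℂ H]
    (F G : Ω → H)
    (L_F L_G : ℝ)
    (hF_bdd : ∀ᵐ ω ∂μ, ‖F ω‖ ≤ L_F)
    (hG_bdd : ∀ᵐ ω ∂μ, ‖G ω‖ ≤ L_G)
    (m : Ω → ℂ) (hm : Integrable m μ)
    (M : H →L[ℂ] H)
    (hM_int : ∀ f g : H, Integrable (fun ω => m ω * ⟪F ω, f⟫ * ⟪g, G ω⟫) μ)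
    (hM : ∀ f g : H, ⟪g, M f⟫ = ∫ ω, m ω * ⟪F ω, f⟫ * ⟪g, G ω⟫ ∂μ)
    (ι : Type) (e : HilbertBasis ι ℂ H) :
    Summable (fun i => ‖⟪e i, M (e i)⟫‖) ∧
    ∑' i, ‖⟪e i, M (e i)⟫‖ ≤ (∫ ω, ‖m ω‖ ∂μ) * L_F * L_G := by
  have hpartial :=
    e.orthonormal.sum_norm_inner_apply_le_of_eq_integral hF_bdd hG_bdd hm hM_int hM
  have hsum : Summable (fun i => ‖⟪e i, M (e i)⟫‖) :=
    summable_of_sum_le (fun i => norm_nonneg _) hpartial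
  exact ⟨hsum, hsum.tsum_le_of_sum_le hpartial⟩

/-- Trace-class property of multipliers with norm-bounded Bessel mappings and `L¹` symbol:
for every orthonormal (Hilbert) basis `(e_i)` of `H`, the family `|⟨M e_i, e_i⟩|` is summable
with `∑_i |⟨M e_i, e_i⟩| ≤ ‖m‖₁ L_F L_G`; in particular `M` is trace class.
In Mathlib's convention the paper's `⟨x, y⟩` is `⟪y, x⟫`. -/
theorem multiplier_trace_class_of_L1_symbol
    {Ω : Type} [MeasurableSpace Ω] (μ : Measure Ω)
    {H : Type} [NormedAddCommGroup H] [InnerProductSpace ℂ H] [CompleteSpace H]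
    (F G : Ω → H) (B_F B_G : ℝ) (hBF : 0 < B_F) (hBG : 0 < B_G)
    (hF_meas : ∀ f : H, Measurable fun ω => ⟪F ω, f⟫)
    (hF_bessel : ∀ f : H,
      ∫⁻ ω, (‖⟪F ω, f⟫‖₊ : ENNReal) ^ 2 ∂μ ≤ ENNReal.ofReal (B_F * ‖f‖ ^ 2))
    (hG_meas : ∀ f : H, Measurable fun ω => ⟪G ω, f⟫)
    (hG_bessel : ∀ f : H,
      ∫⁻ ω, (‖⟪G ω, f⟫‖₊ : ENNReal) ^ 2 ∂μ ≤ ENNReal.ofReal (B_G * ‖f‖ ^ 2))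
    (L_F L_G : ℝ)
    (hF_bdd : ∀ᵐ ω ∂μ, ‖F ω‖ ≤ L_F)
    (hG_bdd : ∀ᵐ ω ∂μ, ‖G ω‖ ≤ L_G)
    (m : Ω → ℂ) (hm : Integrable m μ)
    (M : H →L[ℂ] H)
    (hM_int : ∀ f g : H, Integrable (fun ω => m ω * ⟪F ω, f⟫ * ⟪g, G ω⟫) μ)
    (hM : ∀ f g : H, ⟪g, M f⟫ = ∫ ω, m ω * ⟪F ω, f⟫ * ⟪g, G ω⟫ ∂μ)
    (ι : Type) (e : HilbertBasis ι ℂ H) :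
    Summable (fun i => ‖⟪e i, M (e i)⟫‖) ∧
    ∑' i, ‖⟪e i, M (e i)⟫‖ ≤ (∫ ω, ‖m ω‖ ∂μ) * L_F * L_G :=
  multiplier_trace_class_of_L1_symbol_general μ F G L_F L_G hF_bdd hG_bdd m hm M hM_int hM ι e
end

section
/- Let F and G be Bessel mappings for H with respect to (Ω, μ) with Bessel bounds B_F and B_G. Let m, m' ∈ L^∞(Ω, μ) and let M and M' be the bounded operators satisfying ⟨M f, g⟩ = ∫_Ω m(ω)⟨f, F(ω)⟩⟨G(ω), g⟩ dμ(ω) and ⟨M' f, g⟩ = ∫_Ω m'(ω)⟨f, F(ω)⟩⟨G(ω), g⟩ dμ(ω) for all f, g ∈ H. Then ‖M − M'‖ ≤ ‖m − m'‖_∞ √(B_F B_G); consequently, if (m⁽ⁿ⁾) is a sequence in L^∞(Ω, μ) with ‖m⁽ⁿ⁾ − m‖_∞ → 0, then the corresponding multipliers M⁽ⁿ⁾ converge to M in operator norm. -/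
/-!
For a multiplier `M` with symbol `m`, `⟨M f, g⟩` is the integral of `m` against the product of
the coefficient functions `⟨f, F ·⟩` and `⟨G ·, g⟩`, which lie in `L²` with norms at most
`√B_F ‖f‖` and `√B_G ‖g‖`. Hölder's inequality `L^∞ · L² · L² ⊆ L¹` then gives
`‖M‖ ≤ ‖m‖_∞ √(B_F B_G)`. Since `M - M'` is the multiplier with symbol `m - m'`, this is the
estimate, and the convergence statement follows by applying it to `M⁽ⁿ⁾ - M`.
-/

open MeasureTheory Filter

local notation "⟪" x ", " y "⟫" => @inner ℂ _ _ x y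

namespace MeasureTheory

variable {Ω : Type*} [MeasurableSpace Ω] {μ : Measure Ω}

theorem eLpNorm_two_sq_eq_lintegral {E : Type*} [NormedAddCommGroup E] (f : Ω → E) :
    eLpNorm f 2 μ ^ 2 = ∫⁻ ω, ‖f ω‖ₑ ^ 2 ∂μ := by
  simpa [ENNReal.rpow_two] using eLpNorm_nnreal_pow_eq_lintegral (f := f) (μ := μ) two_ne_zero

variable {A : Type*} [NormedRing A]

theorem eLpNorm_mul_mul_le {c a b : Ω → A} (ha : AEStronglyMeasurable a μ)
    (hb : AEStronglyMeasurable b μ) :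
    eLpNorm (fun ω => c ω * a ω * b ω) 1 μ ≤ eLpNorm c ⊤ μ * eLpNorm a 2 μ * eLpNorm b 2 μ := by
  have hab : eLpNorm (fun ω => a ω * b ω) 1 μ ≤ eLpNorm a 2 μ * eLpNorm b 2 μ := by
    simpa using eLpNorm_le_eLpNorm_mul_eLpNorm_of_nnnorm (r := 1) ha hb (· * ·) 1
      (.of_forall fun ω => by simpa using nnnorm_mul_le (a ω) (b ω))
  calc eLpNorm (fun ω => c ω * a ω * b ω) 1 μ
      = eLpNorm (fun ω => c ω * (a ω * b ω)) 1 μ := by simp only [mul_assoc]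
    _ ≤ eLpNorm c ⊤ μ * eLpNorm (fun ω => a ω * b ω) 1 μ := by
      simpa only [ENNReal.coe_one, one_mul, eLpNorm_exponent_top] using
        eLpNorm_le_eLpNorm_top_mul_eLpNorm 1 c (g := fun ω => a ω * b ω) (ha.mul hb) (· * ·) 1
          (.of_forall fun ω => by simpa using nnnorm_mul_le (c ω) (a ω * b ω))
    _ ≤ eLpNorm c ⊤ μ * eLpNorm a 2 μ * eLpNorm b 2 μ := by
      rw [mul_assoc]; gcongr

theorem MemLp.integrable_mul_mul {c a b : Ω → A} (hc : MemLp c ⊤ μ) (ha : MemLp a 2 μ)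
    (hb : MemLp b 2 μ) : Integrable (fun ω => c ω * a ω * b ω) μ :=
  memLp_one_iff_integrable.1 <| hb.mul' (r := 1) (ha.mul' (r := 2) hc)

end MeasureTheory

theorem ENNReal.ofReal_sqrt_sq (B : ℝ) : ENNReal.ofReal √B ^ 2 = ENNReal.ofReal B := by
  rcases le_total 0 B with hB | hB
  · rw [← ENNReal.ofReal_pow (Real.sqrt_nonneg B), Real.sq_sqrt hB]
  · simp [Real.sqrt_eq_zero'.2 hB, ENNReal.ofReal_of_nonpos hB]

theorem Real.sqrt_mul_sqrt_le (x y : ℝ) : √x * √y ≤ √(x * y) := by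
  rcases le_total 0 x with hx | hx
  · rw [Real.sqrt_mul hx]
  · simp [Real.sqrt_eq_zero'.2 hx]

section Multiplier

variable {Ω : Type*} [MeasurableSpace Ω] {μ : Measure Ω} {𝕜 : Type*} [RCLike 𝕜]
  {H : Type*} [NormedAddCommGroup H] [InnerProductSpace 𝕜 H]

variable (𝕜) in
def IsBesselMap_s11 (μ : Measure Ω) (F : Ω → H) (B : ℝ) : Prop :=
  (∀ f : H, Measurable fun ω => inner 𝕜 (F ω) f) ∧
    ∀ f : H, ∫⁻ ω, ‖inner 𝕜 (F ω) f‖ₑ ^ 2 ∂μ ≤ ENNReal.ofReal (B * ‖f‖ ^ 2)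

namespace IsBesselMap_s11

variable {F : Ω → H} {B : ℝ}

theorem eLpNorm_inner_le (hF : IsBesselMap_s11 𝕜 μ F B) (f : H) :
    eLpNorm (fun ω => inner 𝕜 (F ω) f) 2 μ ≤ ENNReal.ofReal √B * ‖f‖ₑ := by
  rw [← ENNReal.pow_le_pow_left_iff two_ne_zero, mul_pow, ENNReal.ofReal_sqrt_sq,
    ← ofReal_norm, ← ENNReal.ofReal_pow (norm_nonneg f),
    ← ENNReal.ofReal_mul' (by positivity), eLpNorm_two_sq_eq_lintegral]
  exact hF.2 f

theorem eLpNorm_inner_le' (hF : IsBesselMap_s11 𝕜 μ F B) (f : H) :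
    eLpNorm (fun ω => inner 𝕜 f (F ω)) 2 μ ≤ ENNReal.ofReal √B * ‖f‖ₑ :=
  (eLpNorm_congr_norm_ae (.of_forall fun ω => norm_inner_symm f (F ω))).trans_le
    (hF.eLpNorm_inner_le f)

theorem memLp_inner (hF : IsBesselMap_s11 𝕜 μ F B) (f : H) :
    MemLp (fun ω => inner 𝕜 (F ω) f) 2 μ :=
  ⟨(hF.1 f).aestronglyMeasurable, (hF.eLpNorm_inner_le f).trans_lt (by finiteness)⟩

theorem memLp_inner' (hF : IsBesselMap_s11 𝕜 μ F B) (f : H) :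
    MemLp (fun ω => inner 𝕜 f (F ω)) 2 μ := by
  refine ⟨?_, (hF.eLpNorm_inner_le' f).trans_lt (by finiteness)⟩
  simp only [← inner_conj_symm f]
  exact (RCLike.continuous_conj.measurable.comp (hF.1 f)).aestronglyMeasurable

end IsBesselMap_s11

variable (μ) in
/-- The paper's `⟨x, y⟩`, linear in `x`, is `inner 𝕜 y x`. -/
def IsMultiplier (m : Ω → 𝕜) (F G : Ω → H) (M : H →L[𝕜] H) : Prop :=
  ∀ f g : H, inner 𝕜 g (M f) = ∫ ω, m ω * inner 𝕜 (F ω) f * inner 𝕜 g (G ω) ∂μ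

namespace IsMultiplier

variable {F G : Ω → H} {B_F B_G : ℝ} {m m' : Ω → 𝕜} {M M' : H →L[𝕜] H}

theorem sub (hF : IsBesselMap_s11 𝕜 μ F B_F) (hG : IsBesselMap_s11 𝕜 μ G B_G) (hm : MemLp m ⊤ μ)
    (hm' : MemLp m' ⊤ μ) (hM : IsMultiplier μ m F G M) (hM' : IsMultiplier μ m' F G M') :
    IsMultiplier μ (m - m') F G (M - M') := fun f g => by
  rw [sub_apply, inner_sub_right, hM, hM', ← integral_sub
    (hm.integrable_mul_mul (hF.memLp_inner f) (hG.memLp_inner' g))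
    (hm'.integrable_mul_mul (hF.memLp_inner f) (hG.memLp_inner' g))]
  simp only [Pi.sub_apply, sub_mul]

theorem enorm_inner_le (hF : IsBesselMap_s11 𝕜 μ F B_F) (hG : IsBesselMap_s11 𝕜 μ G B_G)
    (hM : IsMultiplier μ m F G M) (f g : H) :
    ‖inner 𝕜 g (M f)‖ₑ ≤
      eLpNorm m ⊤ μ * (ENNReal.ofReal √B_F * ‖f‖ₑ) * (ENNReal.ofReal √B_G * ‖g‖ₑ) := by
  rw [hM]
  calc _ ≤ eLpNorm (fun ω => m ω * inner 𝕜 (F ω) f * inner 𝕜 g (G ω)) 1 μ :=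
        (enorm_integral_le_lintegral_enorm _).trans_eq eLpNorm_one_eq_lintegral_enorm.symm
    _ ≤ _ := eLpNorm_mul_mul_le (hF.memLp_inner f).1 (hG.memLp_inner' g).1
    _ ≤ _ := by gcongr; exacts [hF.eLpNorm_inner_le f, hG.eLpNorm_inner_le' g]

theorem norm_le (hF : IsBesselMap_s11 𝕜 μ F B_F) (hG : IsBesselMap_s11 𝕜 μ G B_G)
    (hM : IsMultiplier μ m F G M) (hm : eLpNorm m ⊤ μ ≠ ⊤) :
    ‖M‖ ≤ (eLpNorm m ⊤ μ).toReal * √(B_F * B_G) := by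
  refine ContinuousLinearMap.opNorm_le_of_re_inner_le (by positivity) fun f g hf hg => ?_
  have hfg := ENNReal.toReal_mono (by finiteness) (hM.enorm_inner_le hF hG f g)
  simp only [ENNReal.toReal_mul, toReal_enorm, hf, hg, ENNReal.toReal_ofReal (Real.sqrt_nonneg _),
    mul_one] at hfg
  calc RCLike.re (inner 𝕜 (M f) g) ≤ ‖inner 𝕜 g (M f)‖ :=
        (RCLike.re_le_norm _).trans (norm_inner_symm _ _).le
    _ ≤ (eLpNorm m ⊤ μ).toReal * (√B_F * √B_G) := hfg.trans_eq (mul_assoc _ _ _)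
    _ ≤ (eLpNorm m ⊤ μ).toReal * √(B_F * B_G) := by gcongr; exact Real.sqrt_mul_sqrt_le _ _

theorem tendsto {ι : Type*} {l : Filter ι} {ms : ι → Ω → 𝕜} {Ms : ι → H →L[𝕜] H}
    (hF : IsBesselMap_s11 𝕜 μ F B_F) (hG : IsBesselMap_s11 𝕜 μ G B_G) (hm : MemLp m ⊤ μ)
    (hM : IsMultiplier μ m F G M) (hms : ∀ i, MemLp (ms i) ⊤ μ)
    (hMs : ∀ i, IsMultiplier μ (ms i) F G (Ms i))
    (hlim : Tendsto (fun i => eLpNorm (ms i - m) ⊤ μ) l (nhds 0)) :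
    Tendsto Ms l (nhds M) := by
  rw [tendsto_iff_norm_sub_tendsto_zero]
  refine squeeze_zero (fun i => norm_nonneg _) (fun i => ((hMs i).sub hF hG (hms i) hm hM).norm_le
    hF hG ((hms i).sub hm).eLpNorm_ne_top) ?_
  simpa using ((ENNReal.tendsto_toReal ENNReal.zero_ne_top).comp hlim).mul_const √(B_F * B_G)

end IsMultiplier

end Multiplier

theorem multiplier_continuous_in_symbol_general
    {Ω : Type} [MeasurableSpace Ω] (μ : Measure Ω)
    {H : Type} [NormedAddCommGroup H] [InnerProductSpace ℂ H]
    (F G : Ω → H) (B_F B_G : ℝ)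
    (hF_meas : ∀ f : H, Measurable fun ω => ⟪F ω, f⟫)
    (hF_bessel : ∀ f : H,
      ∫⁻ ω, (‖⟪F ω, f⟫‖₊ : ENNReal) ^ 2 ∂μ ≤ ENNReal.ofReal (B_F * ‖f‖ ^ 2))
    (hG_meas : ∀ f : H, Measurable fun ω => ⟪G ω, f⟫)
    (hG_bessel : ∀ f : H,
      ∫⁻ ω, (‖⟪G ω, f⟫‖₊ : ENNReal) ^ 2 ∂μ ≤ ENNReal.ofReal (B_G * ‖f‖ ^ 2))
    (m m' : Ω → ℂ) (hm : MemLp m ⊤ μ) (hm' : MemLp m' ⊤ μ)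
    (M M' : H →L[ℂ] H)
    (hM : ∀ f g : H, ⟪g, M f⟫ = ∫ ω, m ω * ⟪F ω, f⟫ * ⟪g, G ω⟫ ∂μ)
    (hM' : ∀ f g : H, ⟪g, M' f⟫ = ∫ ω, m' ω * ⟪F ω, f⟫ * ⟪g, G ω⟫ ∂μ) :
    ‖M - M'‖ ≤ (eLpNorm (fun ω => m ω - m' ω) ⊤ μ).toReal * Real.sqrt (B_F * B_G) ∧
    ∀ (mseq : ℕ → Ω → ℂ) (Mseq : ℕ → H →L[ℂ] H),
      (∀ n, MemLp (mseq n) ⊤ μ) →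
      (∀ n, ∀ f g : H,
        ⟪g, Mseq n f⟫ = ∫ ω, mseq n ω * ⟪F ω, f⟫ * ⟪g, G ω⟫ ∂μ) →
      Tendsto (fun n => eLpNorm (fun ω => mseq n ω - m ω) ⊤ μ) atTop (nhds 0) →
      Tendsto Mseq atTop (nhds M) := by
  have hF : IsBesselMap_s11 ℂ μ F B_F := ⟨hF_meas, hF_bessel⟩
  have hG : IsBesselMap_s11 ℂ μ G B_G := ⟨hG_meas, hG_bessel⟩
  exact ⟨(IsMultiplier.sub hF hG hm hm' hM hM').norm_le hF hG (hm.sub hm').eLpNorm_ne_top,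
    fun _ _ hmseq hMseq hlim => IsMultiplier.tendsto hF hG hm hM hmseq hMseq hlim⟩

/-- Continuous dependence of the multiplier on the symbol: for Bessel mappings `F, G` with
bounds `B_F, B_G` and symbols `m, m' ∈ L^∞(Ω, μ)` one has
`‖M - M'‖ ≤ ‖m - m'‖_∞ √(B_F B_G)`; consequently if `‖m⁽ⁿ⁾ - m‖_∞ → 0`, then the
corresponding multipliers `M⁽ⁿ⁾` converge to `M` in operator norm.
In Mathlib's convention the paper's `⟨x, y⟩` is `⟪y, x⟫`. -/
theorem multiplier_continuous_in_symbol
    {Ω : Type} [MeasurableSpace Ω] (μ : Measure Ω)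
    {H : Type} [NormedAddCommGroup H] [InnerProductSpace ℂ H] [CompleteSpace H]
    (F G : Ω → H) (B_F B_G : ℝ) (hBF : 0 < B_F) (hBG : 0 < B_G)
    (hF_meas : ∀ f : H, Measurable fun ω => ⟪F ω, f⟫)
    (hF_bessel : ∀ f : H,
      ∫⁻ ω, (‖⟪F ω, f⟫‖₊ : ENNReal) ^ 2 ∂μ ≤ ENNReal.ofReal (B_F * ‖f‖ ^ 2))
    (hG_meas : ∀ f : H, Measurable fun ω => ⟪G ω, f⟫)
    (hG_bessel : ∀ f : H,
      ∫⁻ ω, (‖⟪G ω, f⟫‖₊ : ENNReal) ^ 2 ∂μ ≤ ENNReal.ofReal (B_G * ‖f‖ ^ 2))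
    (m m' : Ω → ℂ) (hm : MemLp m ⊤ μ) (hm' : MemLp m' ⊤ μ)
    (M M' : H →L[ℂ] H)
    (hM : ∀ f g : H, ⟪g, M f⟫ = ∫ ω, m ω * ⟪F ω, f⟫ * ⟪g, G ω⟫ ∂μ)
    (hM' : ∀ f g : H, ⟪g, M' f⟫ = ∫ ω, m' ω * ⟪F ω, f⟫ * ⟪g, G ω⟫ ∂μ) :
    ‖M - M'‖ ≤ (eLpNorm (fun ω => m ω - m' ω) ⊤ μ).toReal * Real.sqrt (B_F * B_G) ∧
    ∀ (mseq : ℕ → Ω → ℂ) (Mseq : ℕ → H →L[ℂ] H),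
      (∀ n, MemLp (mseq n) ⊤ μ) →
      (∀ n, ∀ f g : H,
        ⟪g, Mseq n f⟫ = ∫ ω, mseq n ω * ⟪F ω, f⟫ * ⟪g, G ω⟫ ∂μ) →
      Tendsto (fun n => eLpNorm (fun ω => mseq n ω - m ω) ⊤ μ) atTop (nhds 0) →
      Tendsto Mseq atTop (nhds M) :=
  multiplier_continuous_in_symbol_general μ F G B_F B_G hF_meas hF_bessel hG_meas hG_bessel m m' hm
    hm' M M' hM hM'
end

section
/- Let m ∈ L²(Ω, μ), let F and G be Bessel mappings for H with respect to (Ω, μ), with Bessel bound B_G for G, and let (F⁽ⁿ⁾) be a sequence of Bessel mappings converging to F uniformly in the strong sense: for every ε > 0 there is N such that ‖F⁽ⁿ⁾(ω) − F(ω)‖ ≤ ε for all n ≥ N and all ω ∈ Ω. Let M⁽ⁿ⁾ and M be bounded operators satisfying ⟨M⁽ⁿ⁾ f, g⟩ = ∫_Ω m(ω)⟨f, F⁽ⁿ⁾(ω)⟩⟨G(ω), g⟩ dμ(ω) and ⟨M f, g⟩ = ∫_Ω m(ω)⟨f, F(ω)⟩⟨G(ω), g⟩ dμ(ω) for all f,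 g ∈ H. Then M⁽ⁿ⁾ converges to M in operator norm; indeed ‖M⁽ⁿ⁾ − M‖ ≤ ε ‖m‖₂ √B_G whenever ‖F⁽ⁿ⁾(ω) − F(ω)‖ ≤ ε for all ω. -/
/-!
For fixed `f, g`, the coefficient `⟨(M⁽ⁿ⁾ - M) f, g⟩` is the integral of
`m(ω) ⟨f, F⁽ⁿ⁾(ω) - F(ω)⟩ ⟨G(ω), g⟩`. The middle factor is bounded by `ε ‖f‖`, so by
Cauchy–Schwarz in `L²(μ)` the integral is at most `ε ‖f‖ ‖m‖₂ ‖⟨G(·), g⟩‖₂`, and the Bessel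
bound of `G` turns the last factor into `√B_G ‖g‖`.
-/

open MeasureTheory Filter

local notation "⟪" x ", " y "⟫" => @inner ℂ _ _ x y

section Lp

variable {α E : Type*} [MeasurableSpace α] {μ : Measure α} [NormedAddCommGroup E]

theorem eLpNorm_two_le_of_lintegral_sq_le {u : α → E} {c : ℝ}
    (h : ∫⁻ x, (‖u x‖₊ : ENNReal) ^ 2 ∂μ ≤ ENNReal.ofReal c) :
    eLpNorm u 2 μ ≤ ENNReal.ofReal (Real.sqrt c) := by
  have hsqrt : ENNReal.ofReal c ^ (1 / 2 : ℝ) = ENNReal.ofReal (Real.sqrt c) := by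
    rcases le_total 0 c with hc | hc
    · rw [ENNReal.ofReal_rpow_of_nonneg hc (by norm_num), Real.sqrt_eq_rpow]
    · simp [ENNReal.ofReal_of_nonpos hc, Real.sqrt_eq_zero'.2 hc]
  rw [eLpNorm_eq_lintegral_rpow_enorm_toReal two_ne_zero ENNReal.ofNat_ne_top, ← hsqrt,
    ENNReal.toReal_ofNat]
  refine ENNReal.rpow_le_rpow ?_ (by norm_num)
  simpa only [ENNReal.rpow_two, enorm_eq_nnnorm] using h

theorem norm_integral_sub_integral_le_eLpNorm_one [NormedSpace ℝ E] {a b : α → E}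
    (h : Integrable (a - b) μ) :
    ‖∫ x, a x ∂μ - ∫ x, b x ∂μ‖ ≤ (eLpNorm (a - b) 1 μ).toReal := by
  rw [eLpNorm_one_eq_lintegral_enorm, ← integral_norm_eq_lintegral_enorm h.1]
  -- If `b`, hence `a`, is not integrable, both integrals take the junk value `0`.
  by_cases hb : Integrable b μ
  · rw [← integral_sub (by simpa using h.add hb) hb]
    exact norm_integral_le_integral_norm _
  · have ha : ¬ Integrable a μ := fun ha => hb (by simpa using ha.sub h)
    rw [integral_undef ha, integral_undef hb, sub_zero, norm_zero]
    exact integral_nonneg fun _ => norm_nonneg _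

end Lp

section Holder

variable {α 𝕜 : Type*} [MeasurableSpace α] {μ : Measure α} [RCLike 𝕜]
  {m d w : α → 𝕜} {δ : ℝ}

theorem integrable_mul_mul_of_memLp_two (hm : MemLp m 2 μ) (hw : MemLp w 2 μ)
    (hd : AEStronglyMeasurable d μ) (hδ : ∀ᵐ x ∂μ, ‖d x‖ ≤ δ) :
    Integrable (fun x => m x * d x * w x) μ :=
  ((hm.integrable_mul hw).bdd_mul hd hδ).congr (.of_forall fun x => by
    simp only [Pi.mul_apply]; ring)

theorem eLpNorm_mul_mul_le (hm : AEStronglyMeasurable m μ) (hw : AEStronglyMeasurable w μ)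
    (hδ : ∀ᵐ x ∂μ, ‖d x‖ ≤ δ) :
    eLpNorm (fun x => m x * d x * w x) 1 μ ≤
      ENNReal.ofReal δ * eLpNorm m 2 μ * eLpNorm w 2 μ := by
  have hmdw : eLpNorm (fun x => m x * d x * w x) 1 μ ≤
      ENNReal.ofReal δ * eLpNorm (fun x => m x * w x) 1 μ := by
    refine eLpNorm_le_mul_eLpNorm_of_ae_le_mul (hδ.mono fun x hx => ?_) 1
    rw [norm_mul, norm_mul, norm_mul, mul_right_comm, mul_comm δ]
    gcongr
  have hmw : eLpNorm (fun x => m x * w x) 1 μ ≤ 1 * eLpNorm m 2 μ * eLpNorm w 2 μ :=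
    eLpNorm_le_eLpNorm_mul_eLpNorm'_of_norm hm hw (· * ·) 1
      (.of_forall fun x => by simp)
  rw [one_mul] at hmw
  calc _ ≤ _ := hmdw
    _ ≤ _ := by gcongr
    _ = _ := (mul_assoc _ _ _).symm

end Holder

section InnerProductSpace

variable {𝕜 H : Type*} [RCLike 𝕜] [NormedAddCommGroup H] [InnerProductSpace 𝕜 H]

theorem ContinuousLinearMap.opNorm_le_of_inner_le {E : Type*} [NormedAddCommGroup E]
    [NormedSpace 𝕜 E] (T : E →L[𝕜] H) {C : ℝ} (hC : 0 ≤ C)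
    (h : ∀ f g, ‖inner 𝕜 g (T f)‖ ≤ C * ‖f‖ * ‖g‖) : ‖T‖ ≤ C := by
  refine T.opNorm_le_bound hC fun f => ?_
  rcases (norm_nonneg (T f)).eq_or_lt with h0 | hpos
  · rw [← h0]; positivity
  · refine le_of_mul_le_mul_right ?_ hpos
    calc ‖T f‖ * ‖T f‖ = RCLike.re (inner 𝕜 (T f) (T f)) := (inner_self_eq_norm_mul_norm _).symm
      _ ≤ ‖inner 𝕜 (T f) (T f)‖ := RCLike.re_le_norm _
      _ ≤ C * ‖f‖ * ‖T f‖ := h f (T f)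

variable {Ω : Type*} [MeasurableSpace Ω] {μ : Measure Ω}

theorem measurable_inner_right_of_measurable_inner_left {G : Ω → H} {g : H}
    (hG : Measurable fun ω => inner 𝕜 (G ω) g) : Measurable fun ω => inner 𝕜 g (G ω) := by
  simpa only [Function.comp_def, inner_conj_symm] using RCLike.continuous_conj.measurable.comp hG

theorem eLpNorm_inner_le_of_bessel {G : Ω → H} {B : ℝ} {g : H}
    (hG : ∫⁻ ω, (‖inner 𝕜 (G ω) g‖₊ : ENNReal) ^ 2 ∂μ ≤ ENNReal.ofReal (B * ‖g‖ ^ 2)) :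
    eLpNorm (fun ω => inner 𝕜 g (G ω)) 2 μ ≤ ENNReal.ofReal (Real.sqrt B * ‖g‖) := by
  rw [eLpNorm_congr_norm_ae (.of_forall fun ω => norm_inner_symm g (G ω))]
  refine (eLpNorm_two_le_of_lintegral_sq_le hG).trans_eq ?_
  rw [Real.sqrt_mul' _ (sq_nonneg _), Real.sqrt_sq (norm_nonneg _)]

theorem norm_multiplier_sub_le {m : Ω → 𝕜} (hm : MemLp m 2 μ) {F F' G : Ω → H} {B δ : ℝ}
    (hF : ∀ f, Measurable fun ω => inner 𝕜 (F ω) f)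
    (hF' : ∀ f, Measurable fun ω => inner 𝕜 (F' ω) f)
    (hG_meas : ∀ g, Measurable fun ω => inner 𝕜 (G ω) g)
    (hG_bessel : ∀ g,
      ∫⁻ ω, (‖inner 𝕜 (G ω) g‖₊ : ENNReal) ^ 2 ∂μ ≤ ENNReal.ofReal (B * ‖g‖ ^ 2))
    (hδ : 0 ≤ δ) (hFF' : ∀ ω, ‖F' ω - F ω‖ ≤ δ) {M M' : H →L[𝕜] H}
    (hM : ∀ f g, inner 𝕜 g (M f) = ∫ ω, m ω * inner 𝕜 (F ω) f * inner 𝕜 g (G ω) ∂μ)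
    (hM' : ∀ f g, inner 𝕜 g (M' f) = ∫ ω, m ω * inner 𝕜 (F' ω) f * inner 𝕜 g (G ω) ∂μ) :
    ‖M' - M‖ ≤ δ * (eLpNorm m 2 μ).toReal * Real.sqrt B := by
  refine (M' - M).opNorm_le_of_inner_le (by positivity) fun f g => ?_
  set d := fun ω => inner 𝕜 (F' ω - F ω) f
  set w := fun ω => inner 𝕜 g (G ω)
  have hd_meas : AEStronglyMeasurable d μ := by
    simpa only [d, inner_sub_left, Pi.sub_def] using ((hF' f).sub (hF f)).aestronglyMeasurable
  have hd_le : ∀ᵐ ω ∂μ, ‖d ω‖ ≤ δ * ‖f‖ := .of_forall fun ω =>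
    (norm_inner_le_norm _ _).trans (by gcongr; exact hFF' ω)
  have hw_le : eLpNorm w 2 μ ≤ ENNReal.ofReal (Real.sqrt B * ‖g‖) :=
    eLpNorm_inner_le_of_bessel (hG_bessel g)
  have hw : MemLp w 2 μ :=
    ⟨(measurable_inner_right_of_measurable_inner_left (hG_meas g)).aestronglyMeasurable,
      hw_le.trans_lt ENNReal.ofReal_lt_top⟩
  have hdiff : (fun ω => m ω * inner 𝕜 (F' ω) f * w ω) - (fun ω => m ω * inner 𝕜 (F ω) f * w ω)
      = fun ω => m ω * d ω * w ω := by
    ext ω; simp only [Pi.sub_apply, d, inner_sub_left]; ring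
  calc ‖inner 𝕜 g ((M' - M) f)‖
      = ‖∫ ω, m ω * inner 𝕜 (F' ω) f * w ω ∂μ - ∫ ω, m ω * inner 𝕜 (F ω) f * w ω ∂μ‖ := by
        rw [sub_apply, inner_sub_right, hM', hM]
    _ ≤ (eLpNorm (fun ω => m ω * d ω * w ω) 1 μ).toReal := by
        rw [← hdiff]
        exact norm_integral_sub_integral_le_eLpNorm_one
          (hdiff ▸ integrable_mul_mul_of_memLp_two hm hw hd_meas hd_le)
    _ ≤ (ENNReal.ofReal (δ * ‖f‖) * eLpNorm m 2 μ *
          ENNReal.ofReal (Real.sqrt B * ‖g‖)).toReal := by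
        refine ENNReal.toReal_mono (by finiteness [hm.2]) ?_
        exact (eLpNorm_mul_mul_le hm.1 hw.1 hd_le).trans (by gcongr)
    _ = δ * (eLpNorm m 2 μ).toReal * Real.sqrt B * ‖f‖ * ‖g‖ := by
        rw [ENNReal.toReal_mul, ENNReal.toReal_mul, ENNReal.toReal_ofReal (by positivity),
          ENNReal.toReal_ofReal (by positivity)]
        ring

end InnerProductSpace

theorem tendsto_of_eventually_norm_sub_le_mul {ι E : Type*} [SeminormedAddCommGroup E]
    {l : Filter ι} {u : ι → E} {a : E} {K : ℝ} (hK : 0 ≤ K)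
    (h : ∀ ε > 0, ∀ᶠ i in l, ‖u i - a‖ ≤ ε * K) : Tendsto u l (nhds a) := by
  rw [tendsto_iff_norm_sub_tendsto_zero, Metric.tendsto_nhds]
  intro ε hε
  filter_upwards [h (ε / (K + 1)) (by positivity)] with i hi
  rw [Real.dist_0_eq_abs, abs_norm]
  calc ‖u i - a‖ ≤ ε / (K + 1) * K := hi
    _ < ε := by rw [div_mul_eq_mul_div, div_lt_iff₀ (by positivity)]; nlinarith

theorem multiplier_continuous_in_frame_L2_symbol_general
    {Ω : Type} [MeasurableSpace Ω] (μ : Measure Ω)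
    {H : Type} [NormedAddCommGroup H] [InnerProductSpace ℂ H]
    (m : Ω → ℂ) (hm : MemLp m 2 μ)
    (F G : Ω → H) (B_G : ℝ)
    (hF_meas : ∀ f : H, Measurable fun ω => ⟪F ω, f⟫)
    (hG_meas : ∀ f : H, Measurable fun ω => ⟪G ω, f⟫)
    (hG_bessel : ∀ f : H,
      ∫⁻ ω, (‖⟪G ω, f⟫‖₊ : ENNReal) ^ 2 ∂μ ≤ ENNReal.ofReal (B_G * ‖f‖ ^ 2))
    (Fn : ℕ → Ω → H)
    (hFn_meas : ∀ n, ∀ f : H, Measurable fun ω => ⟪Fn n ω, f⟫)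
    (hFn_conv : ∀ ε : ℝ, 0 < ε → ∃ N : ℕ, ∀ n ≥ N, ∀ ω, ‖Fn n ω - F ω‖ ≤ ε)
    (Mn : ℕ → H →L[ℂ] H) (M : H →L[ℂ] H)
    (hMn : ∀ n, ∀ f g : H,
      ⟪g, Mn n f⟫ = ∫ ω, m ω * ⟪Fn n ω, f⟫ * ⟪g, G ω⟫ ∂μ)
    (hM : ∀ f g : H, ⟪g, M f⟫ = ∫ ω, m ω * ⟪F ω, f⟫ * ⟪g, G ω⟫ ∂μ) :
    Tendsto Mn atTop (nhds M) ∧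
    ∀ ε : ℝ, 0 < ε → ∀ n, (∀ ω, ‖Fn n ω - F ω‖ ≤ ε) →
      ‖Mn n - M‖ ≤ ε * (eLpNorm m 2 μ).toReal * Real.sqrt B_G := by
  have bound : ∀ ε : ℝ, 0 < ε → ∀ n, (∀ ω, ‖Fn n ω - F ω‖ ≤ ε) →
      ‖Mn n - M‖ ≤ ε * (eLpNorm m 2 μ).toReal * Real.sqrt B_G := fun ε hε n hn =>
    norm_multiplier_sub_le hm hF_meas (hFn_meas n) hG_meas hG_bessel hε.le hn hM (hMn n)
  refine ⟨tendsto_of_eventually_norm_sub_le_mul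
    (K := (eLpNorm m 2 μ).toReal * Real.sqrt B_G) (by positivity) fun ε hε => ?_, bound⟩
  obtain ⟨N, hN⟩ := hFn_conv ε hε
  filter_upwards [eventually_ge_atTop N] with n hn
  simpa only [mul_assoc] using bound ε hε n (hN n hn)

/-- Continuous dependence of the multiplier on the analysis mapping for `m ∈ L²(Ω, μ)`:
if the Bessel mappings `F⁽ⁿ⁾` converge to `F` uniformly in the strong sense, then the
multipliers `M⁽ⁿ⁾` converge to `M` in operator norm; indeed
`‖M⁽ⁿ⁾ - M‖ ≤ ε ‖m‖₂ √B_G` whenever `‖F⁽ⁿ⁾(ω) - F(ω)‖ ≤ ε` for all `ω`.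
In Mathlib's convention the paper's `⟨x, y⟩` is `⟪y, x⟫`. -/
theorem multiplier_continuous_in_frame_L2_symbol
    {Ω : Type} [MeasurableSpace Ω] (μ : Measure Ω)
    {H : Type} [NormedAddCommGroup H] [InnerProductSpace ℂ H] [CompleteSpace H]
    (m : Ω → ℂ) (hm : MemLp m 2 μ)
    (F G : Ω → H) (B_F B_G : ℝ) (hBF : 0 < B_F) (hBG : 0 < B_G)
    (hF_meas : ∀ f : H, Measurable fun ω => ⟪F ω, f⟫)
    (hF_bessel : ∀ f : H,
      ∫⁻ ω, (‖⟪F ω, f⟫‖₊ : ENNReal) ^ 2 ∂μ ≤ ENNReal.ofReal (B_F * ‖f‖ ^ 2))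
    (hG_meas : ∀ f : H, Measurable fun ω => ⟪G ω, f⟫)
    (hG_bessel : ∀ f : H,
      ∫⁻ ω, (‖⟪G ω, f⟫‖₊ : ENNReal) ^ 2 ∂μ ≤ ENNReal.ofReal (B_G * ‖f‖ ^ 2))
    (Fn : ℕ → Ω → H)
    (hFn_meas : ∀ n, ∀ f : H, Measurable fun ω => ⟪Fn n ω, f⟫)
    (hFn_bessel : ∀ n, ∃ B : ℝ, 0 < B ∧ ∀ f : H,
      ∫⁻ ω, (‖⟪Fn n ω, f⟫‖₊ : ENNReal) ^ 2 ∂μ ≤ ENNReal.ofReal (B * ‖f‖ ^ 2))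
    (hFn_conv : ∀ ε : ℝ, 0 < ε → ∃ N : ℕ, ∀ n ≥ N, ∀ ω, ‖Fn n ω - F ω‖ ≤ ε)
    (Mn : ℕ → H →L[ℂ] H) (M : H →L[ℂ] H)
    (hMn : ∀ n, ∀ f g : H,
      ⟪g, Mn n f⟫ = ∫ ω, m ω * ⟪Fn n ω, f⟫ * ⟪g, G ω⟫ ∂μ)
    (hM : ∀ f g : H, ⟪g, M f⟫ = ∫ ω, m ω * ⟪F ω, f⟫ * ⟪g, G ω⟫ ∂μ) :
    Tendsto Mn atTop (nhds M) ∧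
    ∀ ε : ℝ, 0 < ε → ∀ n, (∀ ω, ‖Fn n ω - F ω‖ ≤ ε) →
      ‖Mn n - M‖ ≤ ε * (eLpNorm m 2 μ).toReal * Real.sqrt B_G :=
  multiplier_continuous_in_frame_L2_symbol_general μ m hm F G B_G hF_meas hG_meas hG_bessel Fn
    hFn_meas hFn_conv Mn M hMn hM
end

section
/- Let m ∈ L¹(Ω, μ), let F and G be Bessel mappings for H with respect to (Ω, μ) with G norm bounded by L_G, and let (F⁽ⁿ⁾) be a sequence of Bessel mappings converging to F uniformly in the strong sense: for every ε > 0 there is N such that ‖F⁽ⁿ⁾(ω) − F(ω)‖ ≤ ε for all n ≥ N and all ω ∈ Ω. Let M⁽ⁿ⁾ and M be bounded operators satisfying ⟨M⁽ⁿ⁾ f, g⟩ = ∫_Ω m(ω)⟨f, F⁽ⁿ⁾(ω)⟩⟨G(ω), g⟩ dμ(ω) and ⟨M f, g⟩ = ∫_Ω m(ω)⟨f, F(ω)⟩⟨G(ω), g⟩ dμ(ω) for all f, g ∈ H. Then M⁽ⁿ⁾ converges to M in operator norm; indeed ‖M⁽ⁿ⁾ − M‖ ≤ ε ‖m‖₁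 L_G whenever ‖F⁽ⁿ⁾(ω) − F(ω)‖ ≤ ε for all ω. -/
open MeasureTheory Filter Topology

local notation "⟪" x ", " y "⟫" => @inner ℂ _ _ x y

/-! `M⁽ⁿ⁾ - M` is, weakly, the multiplier with symbol `m` and analysis mapping `F⁽ⁿ⁾ - F`.
Pointwise `|⟨f, F⁽ⁿ⁾(ω) - F(ω)⟩ ⟨G(ω), g⟩| ≤ ε ‖f‖ L_G ‖g‖`, so integrating against `|m|` bounds
`|⟨(M⁽ⁿ⁾ - M) f, g⟩|` by `ε ‖m‖₁ L_G ‖f‖ ‖g‖`, and the operator norm is the best constant in such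
a bound of the sesquilinear form. -/

theorem ContinuousLinearMap.opNorm_le_of_norm_inner_le {𝕜 E F : Type*} [RCLike 𝕜]
    [NormedAddCommGroup E] [InnerProductSpace 𝕜 E] [NormedAddCommGroup F] [InnerProductSpace 𝕜 F]
    {T : E →L[𝕜] F} {C : ℝ} (hC : 0 ≤ C)
    (h : ∀ x y, ‖inner 𝕜 y (T x)‖ ≤ C * ‖x‖ * ‖y‖) : ‖T‖ ≤ C :=
  opNorm_le_of_re_inner_le hC fun x y hx hy =>
    (RCLike.re_le_norm _).trans (by simpa [norm_inner_symm, hx, hy] using h x y)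

theorem Metric.tendsto_of_forall_eventually_dist_le_mul {α ι : Type*} [PseudoMetricSpace α]
    {l : Filter ι} {u : ι → α} {a : α} {K : ℝ} (hK : 0 ≤ K)
    (h : ∀ ε > 0, ∀ᶠ n in l, dist (u n) a ≤ ε * K) : Tendsto u l (𝓝 a) := by
  refine Metric.nhds_basis_closedBall.tendsto_right_iff.2 fun ε hε => ?_
  filter_upwards [h (ε / (K + 1)) (by positivity)] with n hn
  calc dist (u n) a ≤ ε / (K + 1) * K := hn
    _ ≤ ε / (K + 1) * (K + 1) := by gcongr; linarith
    _ = ε := div_mul_cancel₀ ε (by positivity)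

/-- Integrability of `u - v` makes `u` and `v` integrable together, so the junk value `0` of the
integral of a non-integrable function does no harm. -/
theorem norm_integral_sub_integral_le {Ω E : Type*} [MeasurableSpace Ω] {μ : Measure Ω}
    [NormedAddCommGroup E] [NormedSpace ℝ E] {u v : Ω → E} {b : Ω → ℝ}
    (hb : Integrable b μ) (huv : AEStronglyMeasurable (u - v) μ)
    (h : ∀ᵐ ω ∂μ, ‖u ω - v ω‖ ≤ b ω) :
    ‖∫ ω, u ω ∂μ - ∫ ω, v ω ∂μ‖ ≤ ∫ ω, b ω ∂μ := by
  have hdiff : Integrable (u - v) μ := hb.mono' huv h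
  by_cases hu : Integrable u μ
  · have hv : Integrable v μ := by simpa using hu.sub hdiff
    rw [← integral_sub hu hv]
    exact norm_integral_le_of_norm_le hb h
  · have hv : ¬ Integrable v μ := fun hv => hu (by simpa using hdiff.add hv)
    rw [integral_undef hu, integral_undef hv, sub_zero, norm_zero]
    exact integral_nonneg_of_ae (h.mono fun ω hω => (norm_nonneg _).trans hω)

theorem integral_norm_mul_nonneg {Ω E : Type*} [MeasurableSpace Ω] {μ : Measure Ω}
    [NormedAddCommGroup E] (m : Ω → E) {L : ℝ} (hL : ∀ᵐ _ω ∂μ, 0 ≤ L) :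
    0 ≤ (∫ ω, ‖m ω‖ ∂μ) * L := by
  rw [← integral_mul_const]
  exact integral_nonneg_of_ae (hL.mono fun ω h => mul_nonneg (norm_nonneg _) h)

section Multiplier

variable {Ω H : Type*} [MeasurableSpace Ω] {μ : Measure Ω}
  [NormedAddCommGroup H] [InnerProductSpace ℂ H]

theorem Measurable.inner_swap {G : Ω → H} {g : H} (hG : Measurable fun ω => ⟪G ω, g⟫) :
    Measurable fun ω => ⟪g, G ω⟫ := by
  simpa only [Function.comp_def, inner_conj_symm] using Complex.continuous_conj.measurable.comp hG

theorem norm_integral_multiplier_sub_le {m : Ω → ℂ} (hm : Integrable m μ) {F₁ F₂ G : Ω → H}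
    {f g : H} (hF₁ : Measurable fun ω => ⟪F₁ ω, f⟫) (hF₂ : Measurable fun ω => ⟪F₂ ω, f⟫)
    (hG : Measurable fun ω => ⟪G ω, g⟫) {ε L : ℝ} (hF : ∀ᵐ ω ∂μ, ‖F₁ ω - F₂ ω‖ ≤ ε)
    (hG_bdd : ∀ᵐ ω ∂μ, ‖G ω‖ ≤ L) :
    ‖∫ ω, m ω * ⟪F₁ ω, f⟫ * ⟪g, G ω⟫ ∂μ - ∫ ω, m ω * ⟪F₂ ω, f⟫ * ⟪g, G ω⟫ ∂μ‖ ≤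
      ε * (∫ ω, ‖m ω‖ ∂μ) * L * ‖f‖ * ‖g‖ := by
  have hbound : ∀ᵐ ω ∂μ, ‖m ω * ⟪F₁ ω, f⟫ * ⟪g, G ω⟫ - m ω * ⟪F₂ ω, f⟫ * ⟪g, G ω⟫‖ ≤
      ‖m ω‖ * (ε * ‖f‖ * (L * ‖g‖)) := by
    filter_upwards [hF, hG_bdd] with ω hFω hGω
    have hdiff : ‖⟪F₁ ω, f⟫ - ⟪F₂ ω, f⟫‖ ≤ ε * ‖f‖ := by
      rw [← inner_sub_left]
      exact (norm_inner_le_norm _ _).trans (by gcongr)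
    have hGg : ‖⟪g, G ω⟫‖ ≤ L * ‖g‖ := by
      rw [mul_comm]
      exact (norm_inner_le_norm _ _).trans (by gcongr)
    rw [← sub_mul, ← mul_sub, norm_mul, norm_mul, mul_assoc]
    exact mul_le_mul_of_nonneg_left
      (mul_le_mul hdiff hGg (norm_nonneg _) ((norm_nonneg _).trans hdiff)) (norm_nonneg _)
  have hmeas : AEStronglyMeasurable
      ((fun ω => m ω * ⟪F₁ ω, f⟫ * ⟪g, G ω⟫) - fun ω => m ω * ⟪F₂ ω, f⟫ * ⟪g, G ω⟫) μ :=
    ((hm.1.mul hF₁.aestronglyMeasurable).mul hG.inner_swap.aestronglyMeasurable).sub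
      ((hm.1.mul hF₂.aestronglyMeasurable).mul hG.inner_swap.aestronglyMeasurable)
  calc _ ≤ ∫ ω, ‖m ω‖ * (ε * ‖f‖ * (L * ‖g‖)) ∂μ :=
        norm_integral_sub_integral_le (hm.norm.mul_const _) hmeas hbound
    _ = ε * (∫ ω, ‖m ω‖ ∂μ) * L * ‖f‖ * ‖g‖ := by rw [integral_mul_const]; ring

theorem norm_multiplier_sub_le_s13 {m : Ω → ℂ} (hm : Integrable m μ) {F₁ F₂ G : Ω → H}
    (hF₁ : ∀ f, Measurable fun ω => ⟪F₁ ω, f⟫) (hF₂ : ∀ f, Measurable fun ω => ⟪F₂ ω, f⟫)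
    (hG : ∀ g, Measurable fun ω => ⟪G ω, g⟫) {ε L : ℝ} (hε : 0 ≤ ε)
    (hF : ∀ᵐ ω ∂μ, ‖F₁ ω - F₂ ω‖ ≤ ε) (hG_bdd : ∀ᵐ ω ∂μ, ‖G ω‖ ≤ L) {M₁ M₂ : H →L[ℂ] H}
    (hM₁ : ∀ f g, ⟪g, M₁ f⟫ = ∫ ω, m ω * ⟪F₁ ω, f⟫ * ⟪g, G ω⟫ ∂μ)
    (hM₂ : ∀ f g, ⟪g, M₂ f⟫ = ∫ ω, m ω * ⟪F₂ ω, f⟫ * ⟪g, G ω⟫ ∂μ) :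
    ‖M₁ - M₂‖ ≤ ε * (∫ ω, ‖m ω‖ ∂μ) * L := by
  have hL : ∀ᵐ ω ∂μ, 0 ≤ L := hG_bdd.mono fun ω h => (norm_nonneg _).trans h
  refine ContinuousLinearMap.opNorm_le_of_norm_inner_le
    (by rw [mul_assoc]; exact mul_nonneg hε (integral_norm_mul_nonneg m hL)) fun f g => ?_
  rw [sub_apply, inner_sub_right, hM₁, hM₂]
  exact norm_integral_multiplier_sub_le hm (hF₁ f) (hF₂ f) (hG g) hF hG_bdd

end Multiplier

/-- In Mathlib's convention the paper's `⟨x, y⟩` is `⟪y, x⟫`. -/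
theorem multiplier_continuous_in_frame_L1_symbol_general
    {Ω : Type} [MeasurableSpace Ω] (μ : Measure Ω)
    {H : Type} [NormedAddCommGroup H] [InnerProductSpace ℂ H]
    (m : Ω → ℂ) (hm : Integrable m μ)
    (F G : Ω → H)
    (hF_meas : ∀ f : H, Measurable fun ω => ⟪F ω, f⟫)
    (hG_meas : ∀ f : H, Measurable fun ω => ⟪G ω, f⟫)
    (L_G : ℝ) (hG_bdd : ∀ᵐ ω ∂μ, ‖G ω‖ ≤ L_G)
    (Fn : ℕ → Ω → H)
    (hFn_meas : ∀ n, ∀ f : H, Measurable fun ω => ⟪Fn n ω, f⟫)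
    (hFn_conv : ∀ ε : ℝ, 0 < ε → ∃ N : ℕ, ∀ n ≥ N, ∀ ω, ‖Fn n ω - F ω‖ ≤ ε)
    (Mn : ℕ → H →L[ℂ] H) (M : H →L[ℂ] H)
    (hMn : ∀ n, ∀ f g : H,
      ⟪g, Mn n f⟫ = ∫ ω, m ω * ⟪Fn n ω, f⟫ * ⟪g, G ω⟫ ∂μ)
    (hM : ∀ f g : H, ⟪g, M f⟫ = ∫ ω, m ω * ⟪F ω, f⟫ * ⟪g, G ω⟫ ∂μ) :
    Tendsto Mn atTop (nhds M) ∧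
    ∀ ε : ℝ, 0 < ε → ∀ n, (∀ ω, ‖Fn n ω - F ω‖ ≤ ε) →
      ‖Mn n - M‖ ≤ ε * (∫ ω, ‖m ω‖ ∂μ) * L_G := by
  have hbound : ∀ ε : ℝ, 0 < ε → ∀ n, (∀ ω, ‖Fn n ω - F ω‖ ≤ ε) →
      ‖Mn n - M‖ ≤ ε * (∫ ω, ‖m ω‖ ∂μ) * L_G := fun ε hε n hn =>
    norm_multiplier_sub_le_s13 hm (hFn_meas n) hF_meas hG_meas hε.le (ae_of_all _ hn) hG_bdd
      (hMn n) hM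
  have hK : 0 ≤ (∫ ω, ‖m ω‖ ∂μ) * L_G :=
    integral_norm_mul_nonneg m (hG_bdd.mono fun ω h => (norm_nonneg _).trans h)
  refine ⟨Metric.tendsto_of_forall_eventually_dist_le_mul hK fun ε hε => ?_, hbound⟩
  filter_upwards [eventually_atTop.2 (hFn_conv ε hε)] with n hn
  rw [dist_eq_norm, ← mul_assoc]
  exact hbound ε hε n hn

/-- Continuous dependence of the multiplier on the analysis mapping for `m ∈ L¹(Ω, μ)` and
norm-bounded `G`: if the Bessel mappings `F⁽ⁿ⁾` converge to `F` uniformly in the strong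
sense, then the multipliers `M⁽ⁿ⁾` converge to `M` in operator norm; indeed
`‖M⁽ⁿ⁾ - M‖ ≤ ε ‖m‖₁ L_G` whenever `‖F⁽ⁿ⁾(ω) - F(ω)‖ ≤ ε` for all `ω`.
In Mathlib's convention the paper's `⟨x, y⟩` is `⟪y, x⟫`. -/
theorem multiplier_continuous_in_frame_L1_symbol
    {Ω : Type} [MeasurableSpace Ω] (μ : Measure Ω)
    {H : Type} [NormedAddCommGroup H] [InnerProductSpace ℂ H] [CompleteSpace H]
    (m : Ω → ℂ) (hm : Integrable m μ)
    (F G : Ω → H) (B_F B_G : ℝ) (hBF : 0 < B_F) (hBG : 0 < B_G)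
    (hF_meas : ∀ f : H, Measurable fun ω => ⟪F ω, f⟫)
    (hF_bessel : ∀ f : H,
      ∫⁻ ω, (‖⟪F ω, f⟫‖₊ : ENNReal) ^ 2 ∂μ ≤ ENNReal.ofReal (B_F * ‖f‖ ^ 2))
    (hG_meas : ∀ f : H, Measurable fun ω => ⟪G ω, f⟫)
    (hG_bessel : ∀ f : H,
      ∫⁻ ω, (‖⟪G ω, f⟫‖₊ : ENNReal) ^ 2 ∂μ ≤ ENNReal.ofReal (B_G * ‖f‖ ^ 2))
    (L_G : ℝ) (hG_bdd : ∀ᵐ ω ∂μ, ‖G ω‖ ≤ L_G)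
    (Fn : ℕ → Ω → H)
    (hFn_meas : ∀ n, ∀ f : H, Measurable fun ω => ⟪Fn n ω, f⟫)
    (hFn_bessel : ∀ n, ∃ B : ℝ, 0 < B ∧ ∀ f : H,
      ∫⁻ ω, (‖⟪Fn n ω, f⟫‖₊ : ENNReal) ^ 2 ∂μ ≤ ENNReal.ofReal (B * ‖f‖ ^ 2))
    (hFn_conv : ∀ ε : ℝ, 0 < ε → ∃ N : ℕ, ∀ n ≥ N, ∀ ω, ‖Fn n ω - F ω‖ ≤ ε)
    (Mn : ℕ → H →L[ℂ] H) (M : H →L[ℂ] H)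
    (hMn : ∀ n, ∀ f g : H,
      ⟪g, Mn n f⟫ = ∫ ω, m ω * ⟪Fn n ω, f⟫ * ⟪g, G ω⟫ ∂μ)
    (hM : ∀ f g : H, ⟪g, M f⟫ = ∫ ω, m ω * ⟪F ω, f⟫ * ⟪g, G ω⟫ ∂μ) :
    Tendsto Mn atTop (nhds M) ∧
    ∀ ε : ℝ, 0 < ε → ∀ n, (∀ ω, ‖Fn n ω - F ω‖ ≤ ε) →
      ‖Mn n - M‖ ≤ ε * (∫ ω, ‖m ω‖ ∂μ) * L_G :=
  multiplier_continuous_in_frame_L1_symbol_general μ m hm F G hF_meas hG_meas L_G hG_bdd Fn hFn_meas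
    hFn_conv Mn M hMn hM
end

section
/- Let C : H → H be a bounded linear operator with bounded inverse (C ∈ GL(H)) and let F : Ω → H be a C-controlled continuous frame, i.e., F is weakly measurable, for all f ∈ H the function ω ↦ ⟨f, F(ω)⟩⟨C F(ω), f⟩ is integrable, and there exist constants 0 < m_CL ≤ M_CL < ∞ such that m_CL ‖f‖² ≤ ∫_Ω ⟨f, F(ω)⟩⟨C F(ω), f⟩ dμ(ω) ≤ M_CL ‖f‖² for all f ∈ H. Then F is a continuous frame for H with respect to (Ω, μ). -/
open MeasureTheory
open scoped ComplexOrder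

local notation "⟪" x ", " y "⟫" => @inner ℂ _ _ x y

/-!
By polarization, the integrability and the bound `M_CL ‖f‖²` of the controlled quadratic form
pass to the mixed integrals `∫ ⟪F ω, f⟫ ⟪g, C (F ω)⟫`, which are then bounded by
`M_CL (‖f‖ + ‖g‖)²`. For `g = (C⁻¹)† f` the integrand is `|⟪F ω, f⟫|²`, which gives the upper
frame bound. For the lower one, `m_CL ‖f‖² ≤ ∫ |⟪F ω, f⟫| |⟪F ω, C† f⟫|`; Young's inequality
and the upper frame bound at `C† f` turn this into a lower bound for `∫ |⟪F ω, f⟫|²`.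
-/

section RealIntegrals

variable {Ω : Type*} [MeasurableSpace Ω] {μ : Measure Ω}

lemma le_integral_sq_of_le_integral_mul {a b : Ω → ℝ} (ha : Integrable (fun ω => a ω ^ 2) μ)
    (hb : Integrable (fun ω => b ω ^ 2) μ) (hab : Integrable (fun ω => a ω * b ω) μ)
    {m K t : ℝ} (hm : 0 < m) (hK : 0 < K) (h_lower : m * t ≤ ∫ ω, a ω * b ω ∂μ)
    (h_upper : ∫ ω, b ω ^ 2 ∂μ ≤ K * t) :
    m ^ 2 / K * t ≤ ∫ ω, a ω ^ 2 ∂μ := by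
  -- Young's inequality `a b ≤ (K / 2m) a² + (m / 2K) b²`, weighted so that the `b²` term
  -- contributes at most half of `m t`.
  have h_young : ∫ ω, a ω * b ω ∂μ
      ≤ ∫ ω, (K / (2 * m) * a ω ^ 2 + m / (2 * K) * b ω ^ 2) ∂μ := by
    refine integral_mono hab (by fun_prop) fun ω => ?_
    have := sq_nonneg (K * a ω - m * b ω)
    rw [div_mul_eq_mul_div, div_mul_eq_mul_div, div_add_div _ _ (by positivity) (by positivity),
      le_div_iff₀ (by positivity)]
    nlinarith
  rw [integral_add (by fun_prop) (by fun_prop), integral_const_mul, integral_const_mul] at h_young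
  have h_b : m / (2 * K) * ∫ ω, b ω ^ 2 ∂μ ≤ m * t / 2 := by
    calc m / (2 * K) * ∫ ω, b ω ^ 2 ∂μ ≤ m / (2 * K) * (K * t) := by gcongr
      _ = m * t / 2 := by field_simp
  have h_a : m * t / 2 ≤ K / (2 * m) * ∫ ω, a ω ^ 2 ∂μ := by linarith
  calc m ^ 2 / K * t = 2 * m / K * (m * t / 2) := by field_simp
    _ ≤ 2 * m / K * (K / (2 * m) * ∫ ω, a ω ^ 2 ∂μ) := by gcongr
    _ = ∫ ω, a ω ^ 2 ∂μ := by field_simp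

lemma lintegral_nnnorm_sq_eq_ofReal_integral {E : Type*} [NormedAddCommGroup E] {u : Ω → E}
    (hu : Integrable (fun ω => ‖u ω‖ ^ 2) μ) :
    ∫⁻ ω, (‖u ω‖₊ : ENNReal) ^ 2 ∂μ = ENNReal.ofReal (∫ ω, ‖u ω‖ ^ 2 ∂μ) := by
  rw [ofReal_integral_eq_lintegral_ofReal hu (Filter.Eventually.of_forall fun ω => by positivity)]
  refine lintegral_congr fun ω => ?_
  rw [ENNReal.ofReal_pow (norm_nonneg _), ofReal_norm, enorm_eq_nnnorm]

end RealIntegrals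

section MixedIntegrand

variable {Ω : Type*} {H : Type*} [NormedAddCommGroup H] [InnerProductSpace ℂ H]

noncomputable def mixedIntegrand (F G : Ω → H) (f g : H) (ω : Ω) : ℂ := ⟪F ω, f⟫ * ⟪g, G ω⟫

lemma mixedIntegrand_polarization (F G : Ω → H) (f g : H) :
    mixedIntegrand F G f g = (4⁻¹ : ℂ) • (mixedIntegrand F G (f + g) (f + g)
      - mixedIntegrand F G (f - g) (f - g)
      + Complex.I • mixedIntegrand F G (f + Complex.I • g) (f + Complex.I • g)
      - Complex.I • mixedIntegrand F G (f - Complex.I • g) (f - Complex.I • g)) := by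
  funext ω
  simp only [mixedIntegrand, Pi.smul_apply, Pi.add_apply, Pi.sub_apply, smul_eq_mul,
    inner_add_right, inner_add_left, inner_sub_right, inner_sub_left, inner_smul_right,
    inner_smul_left, Complex.conj_I]
  linear_combination (⟪F ω, f⟫ * ⟪g, G ω⟫ - ⟪F ω, g⟫ * ⟪f, G ω⟫) / 2 * Complex.I_mul_I

lemma mixedIntegrand_self (F : Ω → H) (f : H) :
    mixedIntegrand F F f f = fun ω => ((‖⟪F ω, f⟫‖ ^ 2 : ℝ) : ℂ) := by
  funext ω
  rw [mixedIntegrand, ← inner_conj_symm f, RCLike.mul_conj]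
  norm_cast

lemma mixedIntegrand_comp [CompleteSpace H] (F : Ω → H) (T : H →L[ℂ] H) (f g : H) :
    mixedIntegrand F (fun ω => T (F ω)) f g = mixedIntegrand F F f (T.adjoint g) := by
  funext ω
  simp only [mixedIntegrand, ContinuousLinearMap.adjoint_inner_left]

variable [MeasurableSpace Ω] {μ : Measure Ω} {F G : Ω → H}

lemma integrable_mixedIntegrand (h : ∀ f, Integrable (mixedIntegrand F G f f) μ) (f g : H) :
    Integrable (mixedIntegrand F G f g) μ := by
  rw [mixedIntegrand_polarization]
  fun_prop

lemma integral_mixedIntegrand (h : ∀ f, Integrable (mixedIntegrand F G f f) μ) (f g : H) :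
    ∫ ω, mixedIntegrand F G f g ω ∂μ = (4⁻¹ : ℂ) * (∫ ω, mixedIntegrand F G (f + g) (f + g) ω ∂μ
      - ∫ ω, mixedIntegrand F G (f - g) (f - g) ω ∂μ
      + Complex.I * ∫ ω, mixedIntegrand F G (f + Complex.I • g) (f + Complex.I • g) ω ∂μ
      - Complex.I * ∫ ω, mixedIntegrand F G (f - Complex.I • g) (f - Complex.I • g) ω ∂μ) := by
  simp only [mixedIntegrand_polarization F G f g, Pi.smul_apply, Pi.add_apply, Pi.sub_apply,
    smul_eq_mul]
  rw [integral_const_mul, integral_sub, integral_add, integral_sub, integral_const_mul,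
    integral_const_mul]
  all_goals fun_prop

lemma norm_integral_mixedIntegrand_le (h : ∀ f, Integrable (mixedIntegrand F G f f) μ)
    {M : ℝ} (hM : 0 ≤ M) (h_bound : ∀ f, ‖∫ ω, mixedIntegrand F G f f ω ∂μ‖ ≤ M * ‖f‖ ^ 2)
    (f g : H) :
    ‖∫ ω, mixedIntegrand F G f g ω ∂μ‖ ≤ M * (‖f‖ + ‖g‖) ^ 2 := by
  set Q : H → ℂ := fun u => ∫ ω, mixedIntegrand F G u u ω ∂μ
  have hQ : ∀ u : H, ‖u‖ ≤ ‖f‖ + ‖g‖ → ‖Q u‖ ≤ M * (‖f‖ + ‖g‖) ^ 2 := fun u hu =>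
    (h_bound u).trans (by gcongr)
  have hIg : ‖Complex.I • g‖ = ‖g‖ := by simp [norm_smul]
  have h₁ := hQ (f + g) (norm_add_le f g)
  have h₂ := hQ (f - g) (norm_sub_le f g)
  have h₃ := hQ (f + Complex.I • g) (hIg ▸ norm_add_le _ _)
  have h₄ := hQ (f - Complex.I • g) (hIg ▸ norm_sub_le _ _)
  rw [integral_mixedIntegrand h]
  calc ‖(4⁻¹ : ℂ) * (Q (f + g) - Q (f - g) + Complex.I * Q (f + Complex.I • g)
        - Complex.I * Q (f - Complex.I • g))‖
      ≤ 4⁻¹ * (‖Q (f + g)‖ + ‖Q (f - g)‖ + ‖Q (f + Complex.I • g)‖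
        + ‖Q (f - Complex.I • g)‖) := by
        rw [norm_mul, show ‖(4⁻¹ : ℂ)‖ = 4⁻¹ by norm_num]
        gcongr
        refine (norm_sub_le _ _).trans (add_le_add ((norm_add_le _ _).trans
          (add_le_add (norm_sub_le _ _) ?_)) ?_) <;> simp
    _ ≤ M * (‖f‖ + ‖g‖) ^ 2 := by linarith

end MixedIntegrand

section ControlledFrame

variable {Ω : Type*} [MeasurableSpace Ω] {μ : Measure Ω}
  {H : Type*} [NormedAddCommGroup H] [InnerProductSpace ℂ H] [CompleteSpace H] {F : Ω → H}

lemma adjoint_apply_adjoint_symm_apply (C : H ≃L[ℂ] H) (f : H) :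
    (C : H →L[ℂ] H).adjoint ((C.symm : H →L[ℂ] H).adjoint f) = f := by
  rw [← ContinuousLinearMap.comp_apply, ← ContinuousLinearMap.adjoint_comp,
    ContinuousLinearEquiv.coe_symm_comp_coe, ContinuousLinearMap.adjoint_id,
    ContinuousLinearMap.id_apply]

omit [MeasurableSpace Ω] in
lemma mixedIntegrand_comp_adjoint_symm (C : H ≃L[ℂ] H) (F : Ω → H) (f : H) :
    mixedIntegrand F (fun ω => C (F ω)) f ((C.symm : H →L[ℂ] H).adjoint f)
      = fun ω => ((‖⟪F ω, f⟫‖ ^ 2 : ℝ) : ℂ) := by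
  have h := mixedIntegrand_comp F (C : H →L[ℂ] H) f ((C.symm : H →L[ℂ] H).adjoint f)
  rwa [adjoint_apply_adjoint_symm_apply, mixedIntegrand_self] at h

lemma integrable_norm_inner_sq_of_controlled {C : H ≃L[ℂ] H}
    (h_int : ∀ f, Integrable (mixedIntegrand F (fun ω => C (F ω)) f f) μ) (f : H) :
    Integrable (fun ω => ‖⟪F ω, f⟫‖ ^ 2) μ := by
  have h := integrable_mixedIntegrand h_int f ((C.symm : H →L[ℂ] H).adjoint f)
  rw [mixedIntegrand_comp_adjoint_symm] at h
  simpa only [RCLike.re_to_complex, Complex.ofReal_re] using h.re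

lemma integral_norm_inner_sq_le_of_controlled {C : H ≃L[ℂ] H}
    (h_int : ∀ f, Integrable (mixedIntegrand F (fun ω => C (F ω)) f f) μ) {M : ℝ} (hM : 0 ≤ M)
    (h_bound : ∀ f, ‖∫ ω, mixedIntegrand F (fun ω => C (F ω)) f f ω ∂μ‖ ≤ M * ‖f‖ ^ 2)
    (f : H) :
    ∫ ω, ‖⟪F ω, f⟫‖ ^ 2 ∂μ ≤ M * (1 + ‖(C.symm : H →L[ℂ] H)‖) ^ 2 * ‖f‖ ^ 2 := by
  set g := (C.symm : H →L[ℂ] H).adjoint f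
  have hg : ‖g‖ ≤ ‖(C.symm : H →L[ℂ] H)‖ * ‖f‖ := by
    simpa only [LinearIsometryEquiv.norm_map] using ((C.symm : H →L[ℂ] H).adjoint).le_opNorm f
  have h := norm_integral_mixedIntegrand_le h_int hM h_bound f g
  rw [mixedIntegrand_comp_adjoint_symm] at h
  beta_reduce at h
  rw [integral_complex_ofReal, Complex.norm_real,
    Real.norm_of_nonneg (integral_nonneg fun ω => by positivity)] at h
  calc ∫ ω, ‖⟪F ω, f⟫‖ ^ 2 ∂μ ≤ M * (‖f‖ + ‖g‖) ^ 2 := h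
    _ ≤ M * (‖f‖ + ‖(C.symm : H →L[ℂ] H)‖ * ‖f‖) ^ 2 := by gcongr
    _ = M * (1 + ‖(C.symm : H →L[ℂ] H)‖) ^ 2 * ‖f‖ ^ 2 := by ring

lemma integral_norm_inner_sq_ge_of_controlled {T : H →L[ℂ] H}
    (h_int : ∀ f, Integrable (mixedIntegrand F (fun ω => T (F ω)) f f) μ)
    (h_sq_int : ∀ f, Integrable (fun ω => ‖⟪F ω, f⟫‖ ^ 2) μ) {m B : ℝ} (hm : 0 < m) (hB : 0 < B)
    (h_lower : ∀ f, m * ‖f‖ ^ 2 ≤ ‖∫ ω, mixedIntegrand F (fun ω => T (F ω)) f f ω ∂μ‖)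
    (h_bessel : ∀ f, ∫ ω, ‖⟪F ω, f⟫‖ ^ 2 ∂μ ≤ B * ‖f‖ ^ 2) (f : H) :
    m ^ 2 / (B * (1 + ‖T‖) ^ 2) * ‖f‖ ^ 2 ≤ ∫ ω, ‖⟪F ω, f⟫‖ ^ 2 ∂μ := by
  set g := T.adjoint f
  have h_norm : ∀ ω, ‖mixedIntegrand F (fun ω => T (F ω)) f f ω‖ = ‖⟪F ω, f⟫‖ * ‖⟪F ω, g⟫‖ := by
    intro ω
    rw [mixedIntegrand_comp, mixedIntegrand, norm_mul, norm_inner_symm (F ω) g]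
  have hg : ‖g‖ ≤ (1 + ‖T‖) * ‖f‖ := by
    calc ‖g‖ ≤ ‖T.adjoint‖ * ‖f‖ := T.adjoint.le_opNorm f
      _ ≤ (1 + ‖T‖) * ‖f‖ := by rw [LinearIsometryEquiv.norm_map]; gcongr; linarith
  refine le_integral_sq_of_le_integral_mul (h_sq_int f) (h_sq_int g) ?_ hm (by positivity) ?_ ?_
  · simpa only [h_norm] using (h_int f).norm
  · calc m * ‖f‖ ^ 2 ≤ ‖∫ ω, mixedIntegrand F (fun ω => T (F ω)) f f ω ∂μ‖ := h_lower f
      _ ≤ ∫ ω, ‖mixedIntegrand F (fun ω => T (F ω)) f f ω‖ ∂μ := norm_integral_le_integral_norm _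
      _ = ∫ ω, ‖⟪F ω, f⟫‖ * ‖⟪F ω, g⟫‖ ∂μ := by simp only [h_norm]
  · calc ∫ ω, ‖⟪F ω, g⟫‖ ^ 2 ∂μ ≤ B * ‖g‖ ^ 2 := h_bessel g
      _ ≤ B * ((1 + ‖T‖) * ‖f‖) ^ 2 := by gcongr
      _ = B * (1 + ‖T‖) ^ 2 * ‖f‖ ^ 2 := by ring

end ControlledFrame

theorem controlled_continuous_frame_is_frame_general
    {Ω : Type} [MeasurableSpace Ω] (μ : Measure Ω)
    {H : Type} [NormedAddCommGroup H] [InnerProductSpace ℂ H] [CompleteSpace H]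
    (C : H ≃L[ℂ] H) (F : Ω → H)
    (h_int : ∀ f : H, Integrable (fun ω => ⟪F ω, f⟫ * ⟪f, C (F ω)⟫) μ)
    (m_CL M_CL : ℝ) (h_mCL : 0 < m_CL) (h_le : m_CL ≤ M_CL)
    (h_lower : ∀ f : H,
      (m_CL * ‖f‖ ^ 2 : ℂ) ≤ ∫ ω, ⟪F ω, f⟫ * ⟪f, C (F ω)⟫ ∂μ)
    (h_upper : ∀ f : H,
      ∫ ω, ⟪F ω, f⟫ * ⟪f, C (F ω)⟫ ∂μ ≤ (M_CL * ‖f‖ ^ 2 : ℂ)) :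
    ∃ A B : ℝ, 0 < A ∧
      (∀ f : H,
        ENNReal.ofReal (A * ‖f‖ ^ 2) ≤ ∫⁻ ω, (‖⟪F ω, f⟫‖₊ : ENNReal) ^ 2 ∂μ) ∧
      (∀ f : H,
        ∫⁻ ω, (‖⟪F ω, f⟫‖₊ : ENNReal) ^ 2 ∂μ ≤ ENNReal.ofReal (B * ‖f‖ ^ 2)) := by
  have hM : 0 < M_CL := h_mCL.trans_le h_le
  have h_nonneg : ∀ f : H, (0 : ℂ) ≤ (m_CL * ‖f‖ ^ 2 : ℂ) := fun f => by
    exact_mod_cast (by positivity : 0 ≤ m_CL * ‖f‖ ^ 2)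
  have h_norm_ge : ∀ f : H, m_CL * ‖f‖ ^ 2 ≤ ‖∫ ω, ⟪F ω, f⟫ * ⟪f, C (F ω)⟫ ∂μ‖ := fun f => by
    simpa [abs_of_pos h_mCL] using
      CStarAlgebra.norm_le_norm_of_nonneg_of_le (h_nonneg f) (h_lower f)
  have h_norm_le : ∀ f : H, ‖∫ ω, ⟪F ω, f⟫ * ⟪f, C (F ω)⟫ ∂μ‖ ≤ M_CL * ‖f‖ ^ 2 := fun f => by
    simpa [abs_of_pos hM] using
      CStarAlgebra.norm_le_norm_of_nonneg_of_le ((h_nonneg f).trans (h_lower f)) (h_upper f)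
  have h_sq_int : ∀ f : H, Integrable (fun ω => ‖⟪F ω, f⟫‖ ^ 2) μ :=
    integrable_norm_inner_sq_of_controlled h_int
  obtain ⟨B, hB, h_bessel⟩ : ∃ B > 0, ∀ f : H, ∫ ω, ‖⟪F ω, f⟫‖ ^ 2 ∂μ ≤ B * ‖f‖ ^ 2 :=
    ⟨_, by positivity, integral_norm_inner_sq_le_of_controlled h_int hM.le h_norm_le⟩
  refine ⟨m_CL ^ 2 / (B * (1 + ‖(C : H →L[ℂ] H)‖) ^ 2), B, by positivity, fun f => ?_, fun f => ?_⟩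
  all_goals rw [lintegral_nnnorm_sq_eq_ofReal_integral (h_sq_int f)]
  · exact ENNReal.ofReal_le_ofReal <| integral_norm_inner_sq_ge_of_controlled
      (T := (C : H →L[ℂ] H)) h_int h_sq_int h_mCL hB h_norm_ge h_bessel f
  · exact ENNReal.ofReal_le_ofReal (h_bessel f)

/-- Every `C`-controlled continuous frame (for `C ∈ GL(H)`) is a continuous frame.
The controlled frame condition `m_CL ‖f‖² ≤ ∫ ⟨f, F(ω)⟩⟨C F(ω), f⟩ dμ ≤ M_CL ‖f‖²` is
expressed with the complex order (so in particular the integral is real); in Mathlib's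
convention the paper's `⟨x, y⟩` is `⟪y, x⟫`. -/
theorem controlled_continuous_frame_is_frame
    {Ω : Type} [MeasurableSpace Ω] (μ : Measure Ω)
    {H : Type} [NormedAddCommGroup H] [InnerProductSpace ℂ H] [CompleteSpace H]
    (C : H ≃L[ℂ] H) (F : Ω → H)
    (hF_meas : ∀ f : H, Measurable fun ω => ⟪F ω, f⟫)
    (h_int : ∀ f : H, Integrable (fun ω => ⟪F ω, f⟫ * ⟪f, C (F ω)⟫) μ)
    (m_CL M_CL : ℝ) (h_mCL : 0 < m_CL) (h_le : m_CL ≤ M_CL)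
    (h_lower : ∀ f : H,
      (m_CL * ‖f‖ ^ 2 : ℂ) ≤ ∫ ω, ⟪F ω, f⟫ * ⟪f, C (F ω)⟫ ∂μ)
    (h_upper : ∀ f : H,
      ∫ ω, ⟪F ω, f⟫ * ⟪f, C (F ω)⟫ ∂μ ≤ (M_CL * ‖f‖ ^ 2 : ℂ)) :
    ∃ A B : ℝ, 0 < A ∧
      (∀ f : H,
        ENNReal.ofReal (A * ‖f‖ ^ 2) ≤ ∫⁻ ω, (‖⟪F ω, f⟫‖₊ : ENNReal) ^ 2 ∂μ) ∧
      (∀ f : H,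
        ∫⁻ ω, (‖⟪F ω, f⟫‖₊ : ENNReal) ^ 2 ∂μ ≤ ENNReal.ofReal (B * ‖f‖ ^ 2)) :=
  controlled_continuous_frame_is_frame_general μ C F h_int m_CL M_CL h_mCL h_le h_lower h_upper
end

section
/- Let C ∈ GL(H) be self-adjoint and let F : Ω → H be weakly measurable such that ω ↦ ⟨f, F(ω)⟩⟨C F(ω), f⟩ is integrable for all f ∈ H. Then F is a C-controlled continuous frame (i.e., there exist 0 < m_CL ≤ M_CL with m_CL ‖f‖² ≤ ∫_Ω ⟨f, F(ω)⟩⟨C F(ω), f⟩ dμ(ω) ≤ M_CL ‖f‖² for all f) if and only if F is a continuous frame for H, C is a positive operator, and C commutes with the frame operator S_F of F. -/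
/-
Since `C` is self-adjoint, the controlled integral is the quadratic form `⟪f, (C * S) f⟫`, and `S`
is positive with square root `R`.  If `C * S` is bounded below it is a positive operator, so it is
self-adjoint, which for self-adjoint `C` and `S` means `C * S = S * C`; it is also invertible, hence
so are `S` and `R`, which gives the lower frame bound, and `C` is positive because
`⟪R x, C (R x)⟫ = ⟪x, (C * S) x⟫`.  Conversely, if `C` commutes with `S` it commutes with `R`, and
with `Q` the square root of `C` the controlled integral becomes `‖Q (R f)‖ ^ 2`, where `Q * R` is
invertible.
-/

open MeasureTheory
open scoped ComplexOrder

local notation "⟪" x ", " y "⟫" => @inner ℂ _ _ x y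

open ContinuousLinearMap

theorem ContinuousLinearMap.exists_pos_mul_sq_norm_le_of_isUnit {𝕜 E : Type*}
    [NontriviallyNormedField 𝕜] [SeminormedAddCommGroup E] [NormedSpace 𝕜 E]
    {U : E →L[𝕜] E} (hU : IsUnit U) : ∃ c > 0, ∀ x, c * ‖x‖ ^ 2 ≤ ‖U x‖ ^ 2 := by
  obtain ⟨u, rfl⟩ := hU
  set n := ‖(↑u⁻¹ : E →L[𝕜] E)‖
  refine ⟨(n ^ 2 + 1)⁻¹, by positivity, fun x => ?_⟩
  have hx : ‖x‖ ≤ n * ‖(u : E →L[𝕜] E) x‖ := by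
    calc ‖x‖ = ‖(↑u⁻¹ : E →L[𝕜] E) ((u : E →L[𝕜] E) x)‖ := by
          rw [← mul_apply_eq_comp, u.inv_mul, one_apply_eq_self]
      _ ≤ n * ‖(u : E →L[𝕜] E) x‖ := le_opNorm _ _
  rw [inv_mul_le_iff₀ (by positivity)]
  nlinarith [norm_nonneg x, norm_nonneg ((u : E →L[𝕜] E) x), sq_nonneg n]

section ComplexHilbert

variable {H : Type*} [NormedAddCommGroup H] [InnerProductSpace ℂ H] {C S : H →L[ℂ] H}

theorem ContinuousLinearMap.isPositive_of_forall_inner_nonneg (h : ∀ x, 0 ≤ ⟪x, S x⟫) :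
    S.IsPositive := by
  refine (isPositive_iff_complex S).mpr fun x => ?_
  have hx : 0 ≤ ⟪S x, x⟫ := by rw [← inner_conj_symm]; exact star_nonneg_iff.mpr (h x)
  obtain ⟨hre, him⟩ := RCLike.nonneg_iff.mp hx
  exact ⟨Complex.ext (by simp) (by simpa using him.symm), hre⟩

theorem nonneg_of_forall_inner_pos (h : ∀ x, x ≠ 0 → 0 < ⟪x, C x⟫) : 0 ≤ C := by
  rw [nonneg_iff_isPositive]
  refine isPositive_of_forall_inner_nonneg fun x => ?_
  rcases eq_or_ne x 0 with rfl | hx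
  · simp
  · exact (h x hx).le

variable [CompleteSpace H]

theorem inner_apply_eq_inner_sqrt_apply (hS : 0 ≤ S) (x y : H) :
    ⟪x, S y⟫ = ⟪CFC.sqrt S x, CFC.sqrt S y⟫ := by
  conv_lhs => rw [← CFC.sqrt_mul_sqrt_self S hS, mul_apply_eq_comp]
  exact ((CFC.sqrt_nonneg S).isSelfAdjoint.isSymmetric x _).symm

theorem inner_apply_self_eq_norm_sqrt_apply_sq (hS : 0 ≤ S) (x : H) :
    ⟪x, S x⟫ = ((‖CFC.sqrt S x‖ ^ 2 : ℝ) : ℂ) := by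
  rw [inner_apply_eq_inner_sqrt_apply hS, inner_self_eq_norm_sq_to_K]
  norm_cast

theorem Commute.sqrt_right (h : Commute C S) : Commute C (CFC.sqrt S) := by
  rw [CFC.sqrt_eq_cfc]
  exact (h.symm.cfc_nnreal _).symm

theorem inner_mul_apply_eq_inner_sqrt_apply (hS : 0 ≤ S) (hCS : Commute C S) (x y : H) :
    ⟪x, (C * S) y⟫ = ⟪CFC.sqrt S x, C (CFC.sqrt S y)⟫ := by
  rw [hCS.eq, mul_apply_eq_comp, inner_apply_eq_inner_sqrt_apply hS, ← mul_apply_eq_comp C,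
    hCS.sqrt_right.eq, mul_apply_eq_comp]

theorem inner_mul_apply_self_eq_norm_sqrt_mul_sqrt_apply_sq (hC : 0 ≤ C) (hS : 0 ≤ S)
    (hCS : Commute C S) (x : H) :
    ⟪x, (C * S) x⟫ = ((‖(CFC.sqrt C * CFC.sqrt S) x‖ ^ 2 : ℝ) : ℂ) := by
  rw [inner_mul_apply_eq_inner_sqrt_apply hS hCS, inner_apply_self_eq_norm_sqrt_apply_sq hC,
    mul_apply_eq_comp]

theorem isUnit_iff_exists_pos_mul_sq_norm_le_sqrt (hS : 0 ≤ S) :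
    IsUnit S ↔ ∃ A > 0, ∀ x, A * ‖x‖ ^ 2 ≤ ‖CFC.sqrt S x‖ ^ 2 := by
  refine ⟨fun h => exists_pos_mul_sq_norm_le_of_isUnit ((CFC.isUnit_sqrt_iff S hS).mpr h),
    fun ⟨A, hA, h⟩ => ?_⟩
  refine isUnit_of_forall_le_norm_inner_map S (c := ⟨A, hA.le⟩) hA fun x => ?_
  rw [← norm_inner_symm, inner_apply_self_eq_norm_sqrt_apply_sq hS, Complex.norm_real,
    Real.norm_of_nonneg (by positivity)]
  exact (mul_comm _ _).trans_le (h x)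

theorem inner_pos_of_forall_le_inner_mul (hS : 0 ≤ S) (hSu : IsUnit S) (hCS : Commute C S)
    {m : ℝ} (hm : 0 < m) (h : ∀ x, (m * ‖x‖ ^ 2 : ℂ) ≤ ⟪x, (C * S) x⟫) {f : H} (hf : f ≠ 0) :
    0 < ⟪f, C f⟫ := by
  obtain ⟨u, hu⟩ := (CFC.isUnit_sqrt_iff S hS).mpr hSu
  set x := (↑u⁻¹ : H →L[ℂ] H) f
  have hfx : f = CFC.sqrt S x := by rw [← hu, ← mul_apply_eq_comp, u.mul_inv, one_apply_eq_self]
  have hx : x ≠ 0 := by rintro hx; rw [hx, map_zero] at hfx; exact hf hfx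
  rw [hfx, ← inner_mul_apply_eq_inner_sqrt_apply hS hCS]
  have hpos : 0 < m * ‖x‖ ^ 2 := by positivity
  exact (Complex.zero_lt_real.mpr hpos).trans_le (by exact_mod_cast h x)

theorem exists_controlled_bounds_iff (hC : IsSelfAdjoint C) (hCu : IsUnit C) (hS : 0 ≤ S) :
    (∃ m M : ℝ, 0 < m ∧ m ≤ M ∧ (∀ f : H, (m * ‖f‖ ^ 2 : ℂ) ≤ ⟪f, (C * S) f⟫) ∧
      (∀ f : H, ⟪f, (C * S) f⟫ ≤ (M * ‖f‖ ^ 2 : ℂ))) ↔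
    IsUnit S ∧ (∀ f : H, f ≠ 0 → 0 < ⟪f, C f⟫) ∧ Commute C S := by
  constructor
  · rintro ⟨m, M, hm, -, hlow, -⟩
    have hCSpos : (C * S).IsPositive := isPositive_of_forall_inner_nonneg fun x =>
      le_trans (by exact_mod_cast (by positivity : 0 ≤ m * ‖x‖ ^ 2)) (hlow x)
    have hCS : Commute C S := (hC.commute_iff hS.isSelfAdjoint).mpr hCSpos.isSelfAdjoint
    have hCSu : IsUnit (C * S) := by
      refine isUnit_of_forall_le_norm_inner_map _ (c := ⟨m, hm.le⟩) hm fun x => ?_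
      have hre := (Complex.le_def.mp (hlow x)).1
      norm_cast at hre
      rw [← norm_inner_symm]
      exact (mul_comm _ _).trans_le (hre.trans (Complex.re_le_norm _))
    obtain ⟨u, rfl⟩ := hCu
    have hSu : IsUnit S := (u.isUnit_units_mul S).mp hCSu
    exact ⟨hSu, fun f hf => inner_pos_of_forall_le_inner_mul hS hSu hCS hm hlow hf, hCS⟩
  · rintro ⟨hSu, hCpos, hCS⟩
    have hC0 : 0 ≤ C := nonneg_of_forall_inner_pos hCpos
    obtain ⟨c, hc, hlow⟩ := exists_pos_mul_sq_norm_le_of_isUnit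
      (((CFC.isUnit_sqrt_iff C hC0).mpr hCu).mul ((CFC.isUnit_sqrt_iff S hS).mpr hSu))
    refine ⟨c, max c (‖CFC.sqrt C * CFC.sqrt S‖ ^ 2), hc, le_max_left _ _, fun f => ?_,
      fun f => ?_⟩ <;>
      rw [inner_mul_apply_self_eq_norm_sqrt_mul_sqrt_apply_sq hC0 hS hCS] <;> norm_cast
    · exact hlow f
    · calc ‖(CFC.sqrt C * CFC.sqrt S) f‖ ^ 2 ≤ (‖CFC.sqrt C * CFC.sqrt S‖ * ‖f‖) ^ 2 := by
            gcongr; exact le_opNorm _ _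
        _ ≤ max c (‖CFC.sqrt C * CFC.sqrt S‖ ^ 2) * ‖f‖ ^ 2 := by
            rw [mul_pow]; gcongr; exact le_max_right _ _

end ComplexHilbert

section Frame

variable {Ω : Type*} [MeasurableSpace Ω] {μ : Measure Ω}
  {H : Type*} [NormedAddCommGroup H] [InnerProductSpace ℂ H] {F : Ω → H} {S : H →L[ℂ] H}

def IsFrameOperator (μ : Measure Ω) (F : Ω → H) (S : H →L[ℂ] H) : Prop :=
  ∀ f g : H, ⟪g, S f⟫ = ∫ ω, ⟪F ω, f⟫ * ⟪g, F ω⟫ ∂μ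

theorem IsFrameOperator.inner_apply_self (hS : IsFrameOperator μ F S) (f : H) :
    ⟪f, S f⟫ = ((∫ ω, ‖⟪F ω, f⟫‖ ^ 2 ∂μ : ℝ) : ℂ) := by
  rw [hS, ← integral_complex_ofReal]
  congr with ω
  rw [← inner_conj_symm f (F ω), RCLike.mul_conj]
  norm_cast

theorem IsFrameOperator.nonneg (hS : IsFrameOperator μ F S) : 0 ≤ S := by
  rw [nonneg_iff_isPositive]
  refine isPositive_of_forall_inner_nonneg fun f => ?_
  rw [hS.inner_apply_self]
  exact Complex.zero_le_real.mpr (integral_nonneg fun _ => by positivity)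

variable [CompleteSpace H]

theorem IsFrameOperator.integral_inner_mul_inner_eq (hS : IsFrameOperator μ F S)
    {C : H →L[ℂ] H} (hC : IsSelfAdjoint C) (f : H) :
    ∫ ω, ⟪F ω, f⟫ * ⟪f, C (F ω)⟫ ∂μ = ⟪f, (C * S) f⟫ := by
  have hsymm : ∀ x y : H, ⟪x, C y⟫ = ⟪C x, y⟫ := fun x y => by
    rw [← adjoint_inner_left, hC.adjoint_eq]
  simp_rw [hsymm f]
  rw [← hS f (C f), mul_apply_eq_comp, hsymm]

theorem IsFrameOperator.lintegral_nnnorm_inner_sq_eq (hS : IsFrameOperator μ F S)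
    (hS_int : ∀ f g : H, Integrable (fun ω => ⟪F ω, f⟫ * ⟪g, F ω⟫) μ) (f : H) :
    ∫⁻ ω, (‖⟪F ω, f⟫‖₊ : ENNReal) ^ 2 ∂μ = ENNReal.ofReal (‖CFC.sqrt S f‖ ^ 2) := by
  have hsq : ∀ ω, ‖⟪F ω, f⟫ * ⟪f, F ω⟫‖ = ‖⟪F ω, f⟫‖ ^ 2 := fun ω => by
    rw [norm_mul, norm_inner_symm, sq]
  have hnorm : ∫ ω, ‖⟪F ω, f⟫‖ ^ 2 ∂μ = ‖CFC.sqrt S f‖ ^ 2 := by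
    exact_mod_cast (hS.inner_apply_self f).symm.trans
      (inner_apply_self_eq_norm_sqrt_apply_sq hS.nonneg f)
  rw [← hnorm, ← funext hsq, ofReal_integral_norm_eq_lintegral_enorm (hS_int f f)]
  refine lintegral_congr fun ω => ?_
  rw [← ofReal_norm, hsq, ENNReal.ofReal_pow (norm_nonneg _), ofReal_norm, enorm_eq_nnnorm]

theorem IsFrameOperator.frame_bounds_iff_isUnit (hS : IsFrameOperator μ F S)
    (hS_int : ∀ f g : H, Integrable (fun ω => ⟪F ω, f⟫ * ⟪g, F ω⟫) μ) :
    (∃ A B : ℝ, 0 < A ∧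
        (∀ f : H, ENNReal.ofReal (A * ‖f‖ ^ 2) ≤ ∫⁻ ω, (‖⟪F ω, f⟫‖₊ : ENNReal) ^ 2 ∂μ) ∧
        (∀ f : H, ∫⁻ ω, (‖⟪F ω, f⟫‖₊ : ENNReal) ^ 2 ∂μ ≤ ENNReal.ofReal (B * ‖f‖ ^ 2))) ↔
      IsUnit S := by
  simp_rw [hS.lintegral_nnnorm_inner_sq_eq hS_int,
    isUnit_iff_exists_pos_mul_sq_norm_le_sqrt hS.nonneg]
  constructor
  · rintro ⟨A, -, hA, hlow, -⟩
    exact ⟨A, hA, fun f => (ENNReal.ofReal_le_ofReal_iff (by positivity)).mp (hlow f)⟩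
  · rintro ⟨A, hA, hlow⟩
    refine ⟨A, ‖CFC.sqrt S‖ ^ 2, hA, fun f => ENNReal.ofReal_le_ofReal (hlow f),
      fun f => ENNReal.ofReal_le_ofReal ?_⟩
    rw [← mul_pow]
    gcongr
    exact le_opNorm _ _

end Frame

theorem controlled_frame_iff_frame_positive_commutes_general
    {Ω : Type} [MeasurableSpace Ω] (μ : Measure Ω)
    {H : Type} [NormedAddCommGroup H] [InnerProductSpace ℂ H] [CompleteSpace H]
    (C : H ≃L[ℂ] H) (hC_sa : IsSelfAdjoint (C : H →L[ℂ] H))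
    (F : Ω → H)
    (S : H →L[ℂ] H)
    (hS_int : ∀ f g : H, Integrable (fun ω => ⟪F ω, f⟫ * ⟪g, F ω⟫) μ)
    (hS : ∀ f g : H, ⟪g, S f⟫ = ∫ ω, ⟪F ω, f⟫ * ⟪g, F ω⟫ ∂μ) :
    (∃ m_CL M_CL : ℝ, 0 < m_CL ∧ m_CL ≤ M_CL ∧
      (∀ f : H,
        (m_CL * ‖f‖ ^ 2 : ℂ) ≤ ∫ ω, ⟪F ω, f⟫ * ⟪f, C (F ω)⟫ ∂μ) ∧
      (∀ f : H,
        ∫ ω, ⟪F ω, f⟫ * ⟪f, C (F ω)⟫ ∂μ ≤ (M_CL * ‖f‖ ^ 2 : ℂ)))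
    ↔
    ((∃ A B : ℝ, 0 < A ∧
        (∀ f : H,
          ENNReal.ofReal (A * ‖f‖ ^ 2) ≤ ∫⁻ ω, (‖⟪F ω, f⟫‖₊ : ENNReal) ^ 2 ∂μ) ∧
        (∀ f : H,
          ∫⁻ ω, (‖⟪F ω, f⟫‖₊ : ENNReal) ^ 2 ∂μ ≤ ENNReal.ofReal (B * ‖f‖ ^ 2))) ∧
      (∀ f : H, f ≠ 0 → (0 : ℂ) < ⟪f, C f⟫) ∧
      (C : H →L[ℂ] H).comp S = S.comp (C : H →L[ℂ] H)) := by
  replace hS : IsFrameOperator μ F S := hS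
  have hcontrolled := hS.integral_inner_mul_inner_eq hC_sa
  simp only [ContinuousLinearEquiv.coe_coe] at hcontrolled
  simp_rw [hcontrolled, hS.frame_bounds_iff_isUnit hS_int]
  exact exists_controlled_bounds_iff hC_sa ⟨C.toUnit, rfl⟩ hS.nonneg

/-- For self-adjoint `C ∈ GL(H)` and weakly measurable `F`, `F` is a `C`-controlled
continuous frame if and only if `F` is a continuous frame, `C` is positive and `C` commutes
with the frame operator `S_F` (given here weakly by `⟨S_F f, g⟩ = ∫ ⟨f, F(ω)⟩⟨F(ω), g⟩ dμ`).
Inequalities between complex numbers are taken in the complex order; in Mathlib's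
convention the paper's `⟨x, y⟩` is `⟪y, x⟫`. -/
theorem controlled_frame_iff_frame_positive_commutes
    {Ω : Type} [MeasurableSpace Ω] (μ : Measure Ω)
    {H : Type} [NormedAddCommGroup H] [InnerProductSpace ℂ H] [CompleteSpace H]
    (C : H ≃L[ℂ] H) (hC_sa : IsSelfAdjoint (C : H →L[ℂ] H))
    (F : Ω → H)
    (hF_meas : ∀ f : H, Measurable fun ω => ⟪F ω, f⟫)
    (h_int : ∀ f : H, Integrable (fun ω => ⟪F ω, f⟫ * ⟪f, C (F ω)⟫) μ)
    (S : H →L[ℂ] H)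
    (hS_int : ∀ f g : H, Integrable (fun ω => ⟪F ω, f⟫ * ⟪g, F ω⟫) μ)
    (hS : ∀ f g : H, ⟪g, S f⟫ = ∫ ω, ⟪F ω, f⟫ * ⟪g, F ω⟫ ∂μ) :
    (∃ m_CL M_CL : ℝ, 0 < m_CL ∧ m_CL ≤ M_CL ∧
      (∀ f : H,
        (m_CL * ‖f‖ ^ 2 : ℂ) ≤ ∫ ω, ⟪F ω, f⟫ * ⟪f, C (F ω)⟫ ∂μ) ∧
      (∀ f : H,
        ∫ ω, ⟪F ω, f⟫ * ⟪f, C (F ω)⟫ ∂μ ≤ (M_CL * ‖f‖ ^ 2 : ℂ)))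
    ↔
    ((∃ A B : ℝ, 0 < A ∧
        (∀ f : H,
          ENNReal.ofReal (A * ‖f‖ ^ 2) ≤ ∫⁻ ω, (‖⟪F ω, f⟫‖₊ : ENNReal) ^ 2 ∂μ) ∧
        (∀ f : H,
          ∫⁻ ω, (‖⟪F ω, f⟫‖₊ : ENNReal) ^ 2 ∂μ ≤ ENNReal.ofReal (B * ‖f‖ ^ 2))) ∧
      (∀ f : H, f ≠ 0 → (0 : ℂ) < ⟪f, C f⟫) ∧
      (C : H →L[ℂ] H).comp S = S.comp (C : H →L[ℂ] H)) :=
  controlled_frame_iff_frame_positive_commutes_general μ C hC_sa F S hS_int hS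
end

section
/- Let F and G be weakly measurable maps from Ω to H with G a Bessel mapping with bound B_G, let m : Ω → ℂ be measurable, and let M : H → H be a bounded invertible operator satisfying ⟨M f, g⟩ = ∫_Ω m(ω)⟨f, F(ω)⟩⟨G(ω), g⟩ dμ(ω) for all f, g ∈ H (with the integrands integrable). Then the map ω ↦ conj(m(ω)) F(ω) satisfies the lower frame condition: for all f ∈ H, (1 / (√B_G · ‖(M*)⁻¹‖))² ‖f‖² ≤ ∫_Ω |m(ω)|² |⟨f, F(ω)⟩|² dμ(ω), where the right-hand side may be infinite. -/
/-! Testing the weak definition of `M` against `g = M f` and applying Cauchy–Schwarz together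
with the Bessel bound of `G` gives `‖M f‖⁴ ≤ B_G ‖M f‖² ∫ |m|² |⟨f, F⟩|²`, hence
`‖M f‖² ≤ B_G ∫ |m|² |⟨f, F⟩|²`. Invertibility gives `‖f‖ ≤ ‖M⁻¹‖ ‖M f‖`, and
`‖M⁻¹‖ = ‖(M*)⁻¹‖` since the adjoint is an isometric star operation. -/

open MeasureTheory
open scoped ENNReal

theorem ENNReal.lintegral_mul_sq_le {α : Type*} [MeasurableSpace α] {μ : Measure α}
    {f g : α → ℝ≥0∞} (hf : AEMeasurable f μ) (hg : AEMeasurable g μ) :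
    (∫⁻ a, f a * g a ∂μ) ^ 2 ≤ (∫⁻ a, f a ^ 2 ∂μ) * ∫⁻ a, g a ^ 2 ∂μ := by
  have holder := ENNReal.lintegral_mul_le_Lp_mul_Lq μ Real.HolderConjugate.two_two hf hg
  simp only [Pi.mul_apply, ENNReal.rpow_two] at holder
  have sqrt_sq (x : ℝ≥0∞) : (x ^ (1 / 2 : ℝ)) ^ 2 = x := by
    simpa using ENNReal.rpow_inv_natCast_pow two_ne_zero x
  calc _ ≤ ((∫⁻ a, f a ^ 2 ∂μ) ^ (1 / 2 : ℝ) * (∫⁻ a, g a ^ 2 ∂μ) ^ (1 / 2 : ℝ)) ^ 2 :=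
        pow_le_pow_left₀ zero_le holder 2
    _ = _ := by rw [mul_pow, sqrt_sq, sqrt_sq]

theorem enorm_integral_mul_sq_le {α : Type*} [MeasurableSpace α] {μ : Measure α}
    {𝕜 : Type*} [RCLike 𝕜] {u v : α → 𝕜}
    (hu : AEStronglyMeasurable u μ) (hv : AEStronglyMeasurable v μ) :
    ‖∫ a, u a * v a ∂μ‖ₑ ^ 2 ≤ (∫⁻ a, ‖u a‖ₑ ^ 2 ∂μ) * ∫⁻ a, ‖v a‖ₑ ^ 2 ∂μ :=
  calc ‖∫ a, u a * v a ∂μ‖ₑ ^ 2 ≤ (∫⁻ a, ‖u a‖ₑ * ‖v a‖ₑ ∂μ) ^ 2 := by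
        gcongr
        simpa only [enorm_mul] using enorm_integral_le_lintegral_enorm (fun a => u a * v a)
    _ ≤ _ := ENNReal.lintegral_mul_sq_le hu.enorm hv.enorm

theorem ENNReal.le_of_sq_le_mul {a b : ℝ≥0∞} (ha : a ≠ ⊤) (h : a ^ 2 ≤ b * a) : a ≤ b := by
  rcases eq_or_ne a 0 with rfl | ha0
  · exact zero_le
  · rwa [sq, ENNReal.mul_le_mul_iff_left ha0 ha] at h

theorem norm_le_norm_inverse_mul_norm_apply {𝕜 E : Type*} [NontriviallyNormedField 𝕜]
    [NormedAddCommGroup E] [NormedSpace 𝕜 E] {M : E →L[𝕜] E} (hM : IsUnit M) (x : E) :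
    ‖x‖ ≤ ‖Ring.inverse M‖ * ‖M x‖ := by
  calc ‖x‖ = ‖Ring.inverse M (M x)‖ := by
        rw [← mul_apply_eq_comp, Ring.inverse_mul_cancel M hM, one_apply_eq_self]
    _ ≤ _ := (Ring.inverse M).le_opNorm (M x)

section Multiplier

open scoped InnerProductSpace

variable {Ω : Type*} [MeasurableSpace Ω] {μ : Measure Ω} {𝕜 E : Type*} [RCLike 𝕜]
  [NormedAddCommGroup E] [InnerProductSpace 𝕜 E]

theorem enorm_inner_self_eq_enorm_sq (x : E) : ‖⟪x, x⟫_𝕜‖ₑ = ‖x‖ₑ ^ 2 := by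
  rw [inner_self_eq_norm_sq_to_K, enorm_pow, ← ofReal_norm, RCLike.norm_ofReal, abs_norm,
    ofReal_norm]

theorem enorm_apply_sq_le_of_multiplier {F G : Ω → E} {m : Ω → 𝕜} {M : E →L[𝕜] E}
    (hM : ∀ f g, ⟪g, M f⟫_𝕜 = ∫ ω, m ω * ⟪F ω, f⟫_𝕜 * ⟪g, G ω⟫_𝕜 ∂μ) {B : ℝ}
    (hG_meas : ∀ g, AEStronglyMeasurable (fun ω => ⟪G ω, g⟫_𝕜) μ)
    (hG_bessel : ∀ g, ∫⁻ ω, ‖⟪G ω, g⟫_𝕜‖ₑ ^ 2 ∂μ ≤ ENNReal.ofReal (B * ‖g‖ ^ 2))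
    {f : E} (hmF_meas : AEStronglyMeasurable (fun ω => m ω * ⟪F ω, f⟫_𝕜) μ) :
    ‖M f‖ₑ ^ 2 ≤ ENNReal.ofReal B * ∫⁻ ω, ‖m ω‖ₑ ^ 2 * ‖⟪F ω, f⟫_𝕜‖ₑ ^ 2 ∂μ := by
  set g := M f
  have hG_conj : AEStronglyMeasurable (fun ω => ⟪g, G ω⟫_𝕜) μ := by
    simpa only [Pi.star_def, RCLike.star_def, inner_conj_symm] using (hG_meas g).star
  refine ENNReal.le_of_sq_le_mul (by finiteness) ?_
  calc (‖g‖ₑ ^ 2) ^ 2 = ‖⟪g, M f⟫_𝕜‖ₑ ^ 2 := by rw [enorm_inner_self_eq_enorm_sq]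
    _ ≤ (∫⁻ ω, ‖m ω * ⟪F ω, f⟫_𝕜‖ₑ ^ 2 ∂μ) * ∫⁻ ω, ‖⟪g, G ω⟫_𝕜‖ₑ ^ 2 ∂μ := by
        rw [hM]; exact enorm_integral_mul_sq_le hmF_meas hG_conj
    _ ≤ (∫⁻ ω, ‖m ω‖ₑ ^ 2 * ‖⟪F ω, f⟫_𝕜‖ₑ ^ 2 ∂μ) * ENNReal.ofReal (B * ‖g‖ ^ 2) := by
        simp only [enorm_mul, mul_pow, ← RCLike.enorm_conj ⟪g, _⟫_𝕜, inner_conj_symm]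
        gcongr
        exact hG_bessel g
    _ = ENNReal.ofReal B * (∫⁻ ω, ‖m ω‖ₑ ^ 2 * ‖⟪F ω, f⟫_𝕜‖ₑ ^ 2 ∂μ) * ‖g‖ₑ ^ 2 := by
        rw [ENNReal.ofReal_mul' (by positivity), ENNReal.ofReal_pow (norm_nonneg g), ofReal_norm]
        ring

end Multiplier

theorem ENNReal.ofReal_div_sqrt_mul_sq_mul_sq_le {B C x y : ℝ} {I : ℝ≥0∞} (hx : 0 ≤ x)
    (hxy : x ≤ C * y) (hy : ENNReal.ofReal (y ^ 2) ≤ ENNReal.ofReal B * I) :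
    ENNReal.ofReal ((1 / (√B * C)) ^ 2 * x ^ 2) ≤ I := by
  rcases eq_or_ne (√B * C) 0 with hBC | hBC
  · simp [hBC] -- `1 / 0 = 0`
  have hB : 0 < B := Real.sqrt_pos.mp ((Real.sqrt_nonneg B).lt_of_ne' (left_ne_zero_of_mul hBC))
  have hC : C ≠ 0 := right_ne_zero_of_mul hBC
  have hx_sq : x ^ 2 ≤ C ^ 2 * y ^ 2 := by
    simpa only [mul_pow] using pow_le_pow_left₀ hx hxy 2
  have key : (1 / (√B * C)) ^ 2 * x ^ 2 ≤ y ^ 2 / B := by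
    rw [div_pow, mul_pow, Real.sq_sqrt hB.le, one_pow, div_mul_eq_mul_div, one_mul,
      div_le_div_iff₀ (by positivity) hB]
    nlinarith
  calc ENNReal.ofReal ((1 / (√B * C)) ^ 2 * x ^ 2) ≤ ENNReal.ofReal (y ^ 2 / B) :=
        ENNReal.ofReal_le_ofReal key
    _ = ENNReal.ofReal (y ^ 2) / ENNReal.ofReal B := ENNReal.ofReal_div_of_pos hB
    _ ≤ I := ENNReal.div_le_of_le_mul' hy

local notation "⟪" x ", " y "⟫" => @inner ℂ _ _ x y

/-- The paper's `⟨x, y⟩` is `⟪y, x⟫` here. -/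
theorem lower_frame_condition_of_invertible_multiplier_general
    {Ω : Type} [MeasurableSpace Ω] (μ : Measure Ω)
    {H : Type} [NormedAddCommGroup H] [InnerProductSpace ℂ H] [CompleteSpace H]
    (F G : Ω → H)
    (hF_meas : ∀ f : H, Measurable fun ω => ⟪F ω, f⟫)
    (hG_meas : ∀ f : H, Measurable fun ω => ⟪G ω, f⟫)
    (B_G : ℝ)
    (hG_bessel : ∀ f : H,
      ∫⁻ ω, (‖⟪G ω, f⟫‖₊ : ENNReal) ^ 2 ∂μ ≤ ENNReal.ofReal (B_G * ‖f‖ ^ 2))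
    (m : Ω → ℂ) (hm_meas : Measurable m)
    (M : H →L[ℂ] H) (hM_unit : IsUnit M)
    (hM : ∀ f g : H, ⟪g, M f⟫ = ∫ ω, m ω * ⟪F ω, f⟫ * ⟪g, G ω⟫ ∂μ) :
    ∀ f : H,
      ENNReal.ofReal
          ((1 / (Real.sqrt B_G * ‖Ring.inverse (ContinuousLinearMap.adjoint M)‖)) ^ 2
            * ‖f‖ ^ 2)
        ≤ ∫⁻ ω, (‖m ω‖₊ : ENNReal) ^ 2 * (‖⟪F ω, f⟫‖₊ : ENNReal) ^ 2 ∂μ := by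
  intro f
  have hMf := enorm_apply_sq_le_of_multiplier hM (fun g => (hG_meas g).aestronglyMeasurable)
    hG_bessel (hm_meas.mul (hF_meas f)).aestronglyMeasurable
  rw [← ContinuousLinearMap.star_eq_adjoint, Ring.inverse_star, norm_star]
  refine ENNReal.ofReal_div_sqrt_mul_sq_mul_sq_le (norm_nonneg f)
    (norm_le_norm_inverse_mul_norm_apply hM_unit f) ?_
  rwa [ENNReal.ofReal_pow (norm_nonneg _), ofReal_norm]

/-- If the multiplier `M_{m,F,G}` is bounded and invertible and `G` is Bessel with bound
`B_G`, then `conj(m) F` satisfies the lower frame condition with bound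
`(1 / (√B_G ‖(M*)⁻¹‖))²`.  Here `(M*)⁻¹` is `Ring.inverse (adjoint M)`, the right-hand side
is a lower Lebesgue integral (it may be infinite), and in Mathlib's convention the paper's
`⟨x, y⟩` is `⟪y, x⟫`. -/
theorem lower_frame_condition_of_invertible_multiplier
    {Ω : Type} [MeasurableSpace Ω] (μ : Measure Ω)
    {H : Type} [NormedAddCommGroup H] [InnerProductSpace ℂ H] [CompleteSpace H]
    (F G : Ω → H)
    (hF_meas : ∀ f : H, Measurable fun ω => ⟪F ω, f⟫)
    (hG_meas : ∀ f : H, Measurable fun ω => ⟪G ω, f⟫)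
    (B_G : ℝ) (hBG : 0 < B_G)
    (hG_bessel : ∀ f : H,
      ∫⁻ ω, (‖⟪G ω, f⟫‖₊ : ENNReal) ^ 2 ∂μ ≤ ENNReal.ofReal (B_G * ‖f‖ ^ 2))
    (m : Ω → ℂ) (hm_meas : Measurable m)
    (M : H →L[ℂ] H) (hM_unit : IsUnit M)
    (hM_int : ∀ f g : H, Integrable (fun ω => m ω * ⟪F ω, f⟫ * ⟪g, G ω⟫) μ)
    (hM : ∀ f g : H, ⟪g, M f⟫ = ∫ ω, m ω * ⟪F ω, f⟫ * ⟪g, G ω⟫ ∂μ) :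
    ∀ f : H,
      ENNReal.ofReal
          ((1 / (Real.sqrt B_G * ‖Ring.inverse (ContinuousLinearMap.adjoint M)‖)) ^ 2
            * ‖f‖ ^ 2)
        ≤ ∫⁻ ω, (‖m ω‖₊ : ENNReal) ^ 2 * (‖⟪F ω, f⟫‖₊ : ENNReal) ^ 2 ∂μ :=
  lower_frame_condition_of_invertible_multiplier_general μ F G hF_meas hG_meas B_G hG_bessel m
    hm_meas M hM_unit hM
end

section
/- Let F and G be weakly measurable maps from Ω to H with G a continuous frame, let m : Ω → ℂ be measurable, and let M : H → H be a bounded invertible operator satisfying ⟨M f, g⟩ = ∫_Ω m(ω)⟨f, F(ω)⟩⟨G(ω), g⟩ dμ(ω) for all f, g ∈ H (with the integrands integrable). Then the map ω ↦ (M⁻¹)*(conj(m(ω)) F(ω)) is a dual of G in the sense of the reproducing identity: for all f, g ∈ H, ⟨f, g⟩ = ∫_Ω ⟨f, (M⁻¹)*(conj(m(ω)) F(ω))⟩ ⟨G(ω), g⟩ dμ(ω). -/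
open MeasureTheory ComplexConjugate

local notation "⟪" x ", " y "⟫" => @inner ℂ _ _ x y

/-! The reproducing identity is `M M⁻¹ = 1` read through the multiplier: apply `hM` to
`(M⁻¹ f, g)` and move `M⁻¹` and `m(ω)` across the first inner product. -/

lemma ContinuousLinearMap.inner_adjoint_conj_smul_left {𝕜 E F : Type*} [RCLike 𝕜]
    [NormedAddCommGroup E] [InnerProductSpace 𝕜 E] [CompleteSpace E]
    [NormedAddCommGroup F] [InnerProductSpace 𝕜 F] [CompleteSpace F]
    (A : E →L[𝕜] F) (c : 𝕜) (x : F) (y : E) :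
    inner 𝕜 (adjoint A (conj c • x)) y = c * inner 𝕜 x (A y) := by
  rw [adjoint_inner_left, inner_smul_left, RCLike.conj_conj]

theorem dual_frame_from_invertible_multiplier_general
    {Ω : Type} [MeasurableSpace Ω] (μ : Measure Ω)
    {H : Type} [NormedAddCommGroup H] [InnerProductSpace ℂ H] [CompleteSpace H]
    (F G : Ω → H)
    (m : Ω → ℂ)
    (M : H ≃L[ℂ] H)
    (hM_int : ∀ f g : H, Integrable (fun ω => m ω * ⟪F ω, f⟫ * ⟪g, G ω⟫) μ)
    (hM : ∀ f g : H, ⟪g, M f⟫ = ∫ ω, m ω * ⟪F ω, f⟫ * ⟪g, G ω⟫ ∂μ) :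
    ∀ f g : H,
      Integrable
        (fun ω =>
          ⟪ContinuousLinearMap.adjoint (M.symm : H →L[ℂ] H) (conj (m ω) • F ω), f⟫ *
            ⟪g, G ω⟫) μ ∧
      ⟪g, f⟫ = ∫ ω,
          ⟪ContinuousLinearMap.adjoint (M.symm : H →L[ℂ] H) (conj (m ω) • F ω), f⟫ *
            ⟪g, G ω⟫ ∂μ := by
  intro f g
  have hdual : (fun ω =>
      ⟪ContinuousLinearMap.adjoint (M.symm : H →L[ℂ] H) (conj (m ω) • F ω), f⟫ * ⟪g, G ω⟫) =
      fun ω => m ω * ⟪F ω, M.symm f⟫ * ⟪g, G ω⟫ := by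
    funext ω
    rw [ContinuousLinearMap.inner_adjoint_conj_smul_left]
    rfl
  rw [hdual, ← hM, M.apply_symm_apply]
  exact ⟨hM_int _ g, rfl⟩

/-- If the multiplier `M = M_{m,F,G}` is bounded and invertible and `G` is a continuous
frame, then `ω ↦ (M⁻¹)* (conj(m(ω)) F(ω))` is a dual of `G`:
`⟨f, g⟩ = ∫ ⟨f, (M⁻¹)*(conj(m(ω)) F(ω))⟩ ⟨G(ω), g⟩ dμ` for all `f, g`.
Here `M` is taken as a continuous linear equivalence, `(M⁻¹)* = adjoint (M.symm)`, and in
Mathlib's convention the paper's `⟨x, y⟩` is `⟪y, x⟫`. -/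
theorem dual_frame_from_invertible_multiplier
    {Ω : Type} [MeasurableSpace Ω] (μ : Measure Ω)
    {H : Type} [NormedAddCommGroup H] [InnerProductSpace ℂ H] [CompleteSpace H]
    (F G : Ω → H)
    (hF_meas : ∀ f : H, Measurable fun ω => ⟪F ω, f⟫)
    (hG_meas : ∀ f : H, Measurable fun ω => ⟪G ω, f⟫)
    (A_G B_G : ℝ) (hAG : 0 < A_G)
    (hG_lower : ∀ f : H,
      ENNReal.ofReal (A_G * ‖f‖ ^ 2) ≤ ∫⁻ ω, (‖⟪G ω, f⟫‖₊ : ENNReal) ^ 2 ∂μ)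
    (hG_upper : ∀ f : H,
      ∫⁻ ω, (‖⟪G ω, f⟫‖₊ : ENNReal) ^ 2 ∂μ ≤ ENNReal.ofReal (B_G * ‖f‖ ^ 2))
    (m : Ω → ℂ) (hm_meas : Measurable m)
    (M : H ≃L[ℂ] H)
    (hM_int : ∀ f g : H, Integrable (fun ω => m ω * ⟪F ω, f⟫ * ⟪g, G ω⟫) μ)
    (hM : ∀ f g : H, ⟪g, M f⟫ = ∫ ω, m ω * ⟪F ω, f⟫ * ⟪g, G ω⟫ ∂μ) :
    ∀ f g : H,
      Integrable
        (fun ω =>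
          ⟪ContinuousLinearMap.adjoint (M.symm : H →L[ℂ] H) (conj (m ω) • F ω), f⟫ *
            ⟪g, G ω⟫) μ ∧
      ⟪g, f⟫ = ∫ ω,
          ⟪ContinuousLinearMap.adjoint (M.symm : H →L[ℂ] H) (conj (m ω) • F ω), f⟫ *
            ⟪g, G ω⟫ ∂μ :=
  dual_frame_from_invertible_multiplier_general μ F G m M hM_int hM
end
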